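/- arXiv:2103.10980 — 12 statements merged into one kernel-verified Lean document; each statement's English description precedes it below -/
import Mathlib

section
/- For any proper ideal I of C(X), the set I_B = {f ∈ B₁(X) : there exists a sequence {fₙ} ⊆ I with fₙ → f pointwise} is an ideal of B₁(X) satisfying I ⊆ I_B ∩ C(X). -/
open Filter Topology

def CFun (X : Type*) [TopologicalSpace X] : Subring (X → ℝ) where
  carrier := {f | Continuous f}
  one_mem' := continuous_const
  zero_mem' := continuous_const
  add_mem' := fun hf hg => hf.add hg
  mul_mem' := fun hf hg => hf.mul hg
  neg_mem' := fun hf => hf.neg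

def B1 (X : Type*) [TopologicalSpace X] : Subring (X → ℝ) where
  carrier := {f | ∃ u : ℕ → C(X, ℝ), ∀ x, Tendsto (fun n => u n x) atTop (𝓝 (f x))}
  one_mem' := ⟨fun _ => 1, fun _ => tendsto_const_nhds⟩
  zero_mem' := ⟨fun _ => 0, fun _ => tendsto_const_nhds⟩
  add_mem' := by
    rintro f g ⟨u, hu⟩ ⟨v, hv⟩
    exact ⟨fun n => u n + v n, fun x => (hu x).add (hv x)⟩
  mul_mem' := by
    rintro f g ⟨u, hu⟩ ⟨v, hv⟩
    exact ⟨fun n => u n * v n, fun x => (hu x).mul (hv x)⟩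
  neg_mem' := by
    rintro f ⟨u, hu⟩
    exact ⟨fun n => -u n, fun x => (hu x).neg⟩

theorem CFun_le_B1 (X : Type*) [TopologicalSpace X] : CFun X ≤ B1 X :=
  fun f hf => ⟨fun _ => ⟨f, hf⟩, fun _ => tendsto_const_nhds⟩

def inclB (X : Type*) [TopologicalSpace X] : CFun X →+* B1 X :=
  Subring.inclusion (CFun_le_B1 X)

def idealB {X : Type*} [TopologicalSpace X] (I : Ideal (CFun X)) : Set (B1 X) :=
  {f | ∃ u : ℕ → CFun X, (∀ n, u n ∈ I) ∧
    ∀ x, Tendsto (fun n => (u n : X → ℝ) x) atTop (𝓝 ((f : X → ℝ) x))}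

def IsRealMax {X : Type*} [TopologicalSpace X] (M : Ideal (CFun X)) : Prop :=
  M.IsMaximal ∧ Nonempty ((CFun X ⧸ M) ≃+* ℝ)

def IsRealMaxB {X : Type*} [TopologicalSpace X] (M : Ideal (B1 X)) : Prop :=
  M.IsMaximal ∧ Nonempty ((B1 X ⧸ M) ≃+* ℝ)

def evalC {X : Type*} [TopologicalSpace X] (p : X) : CFun X →+* ℝ :=
  (Pi.evalRingHom (fun _ => ℝ) p).comp (CFun X).subtype

def evalB {X : Type*} [TopologicalSpace X] (p : X) : B1 X →+* ℝ :=
  (Pi.evalRingHom (fun _ => ℝ) p).comp (B1 X).subtype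

def constB1 {X : Type*} [TopologicalSpace X] (r : ℝ) : B1 X :=
  ⟨fun _ => r, ⟨fun _ => ContinuousMap.const X r, fun _ => tendsto_const_nhds⟩⟩

theorem idealB_is_ideal {X : Type*} [TopologicalSpace X]
    (I : Ideal (CFun X)) (hI : I ≠ ⊤) :
    ∃ J : Ideal (B1 X), (↑J : Set (B1 X)) = idealB I ∧
      ∀ g : CFun X, g ∈ I → inclB X g ∈ J := by
  refine ⟨{ carrier := idealB I
            zero_mem' := ⟨fun _ => 0, fun _ => I.zero_mem, fun _ => tendsto_const_nhds⟩
            add_mem' := ?_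
            smul_mem' := ?_ }, rfl, ?_⟩
  · rintro f g ⟨u, hu, hul⟩ ⟨v, hv, hvl⟩
    exact ⟨fun n => u n + v n, fun n => I.add_mem (hu n) (hv n),
      fun x => (hul x).add (hvl x)⟩
  · rintro c f ⟨u, hu, hul⟩
    obtain ⟨w, hw⟩ := c.2
    refine ⟨fun n => (⟨w n, (w n).continuous⟩ : CFun X) * u n,
      fun n => I.mul_mem_left _ (hu n), fun x => (hw x).mul (hul x)⟩
  · intro g hg
    exact ⟨fun _ => g, fun _ => hg, fun _ => tendsto_const_nhds⟩
end

section
/- For each point p ∈ X, (M_p)_B = M̂_p; that is, the set of Baire one functions that are pointwise limits of sequences of continuous functions vanishing at p equals the set of Baire one functions vanishing at p. -/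
open Filter Topology

theorem idealB_fixed_maximal {X : Type*} [TopologicalSpace X] (p : X) :
    idealB (RingHom.ker (evalC p)) = {f : B1 X | (f : X → ℝ) p = 0} := by
  ext f
  constructor
  · rintro ⟨u, hu, hlim⟩
    have h0 : ∀ n, ((u n : CFun X) : X → ℝ) p = 0 := fun n => hu n
    have h := hlim p
    simp only [h0] at h
    exact tendsto_nhds_unique h tendsto_const_nhds
  · intro hf
    obtain ⟨u, hu⟩ := f.2
    refine ⟨fun n => ⟨fun x => u n x - u n p, ((u n).continuous.sub continuous_const)⟩,
      fun n => ?_, fun x => ?_⟩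
    · simp [RingHom.mem_ker, evalC]
    · have h := (hu x).sub (hu p)
      rw [show (f : X → ℝ) p = 0 from hf, sub_zero] at h
      exact h
end

section
/- A maximal ideal M of C(X) is real (i.e., C(X)/M ≅ ℝ) if and only if M = M_B ∩ C(X), where M_B is the set of Baire one functions arising as pointwise limits of sequences from M. -/
open Filter Topology

/-! A ring homomorphism `ψ : C(X) → ℝ` is monotone, since nonnegative functions are squares. If
`k n ∈ ker ψ` had no common zero, `H = ∑ 2⁻ⁿ kₙ² / (1 + kₙ²)` would be a unit, while `ψ H` is
bounded by the tails `2 · 2⁻ᴺ`: so the zero sets of a real maximal ideal `M` have the countable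
intersection property. Then if `u n ∈ M` tends pointwise to `g` and `g - r ∈ M`, a common zero `x`
of the `g - r - u n` gives `r = g x - lim u n x = 0`, i.e. `g ∈ M`.

Conversely, if `M` is closed under pointwise limits, `min ((m + 1) ∑_{j<m} kⱼ², 1) ∈ M` would tend
to `1` if the `kⱼ ∈ M` had no common zero. If moreover `f - r ∉ M` for every `r`, primeness and the
countable intersection property give, for each `r`, a ball around `r` that `f` avoids on some zero
set of `M`; countably many of these balls cover `ℝ`, and a common zero of the corresponding
functions is a contradiction. So every `f` is congruent to a constant modulo `M`, and
`ℝ → C(X) ⧸ M` is an isomorphism. -/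

section GeometricWeights

variable {b : ℕ → ℝ}

lemma summable_geometric_inv_two : Summable fun n => (2⁻¹ : ℝ) ^ n :=
  summable_geometric_of_lt_one (by norm_num) (by norm_num)

lemma summable_geometric_inv_two_mul (h0 : ∀ n, 0 ≤ b n) (h1 : ∀ n, b n ≤ 1) :
    Summable fun n => (2⁻¹ : ℝ) ^ n * b n :=
  summable_geometric_inv_two.of_nonneg_of_le (fun n => mul_nonneg (by positivity) (h0 n))
    fun n => mul_le_of_le_one_right (by positivity) (h1 n)

lemma tsum_geometric_inv_two_mul_le (h0 : ∀ n, 0 ≤ b n) (h1 : ∀ n, b n ≤ 1) (N : ℕ) :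
    ∑' n, 2⁻¹ ^ n * b n ≤ ∑ n ∈ Finset.range N, 2⁻¹ ^ n * b n + 2 * 2⁻¹ ^ N := by
  have hs := summable_geometric_inv_two_mul h0 h1
  rw [← hs.sum_add_tsum_nat_add N]
  gcongr
  calc ∑' n, (2⁻¹ : ℝ) ^ (n + N) * b (n + N)
      ≤ ∑' n, (2⁻¹ : ℝ) ^ (n + N) :=
        ((summable_nat_add_iff N).2 hs).tsum_le_tsum
          (fun n => mul_le_of_le_one_right (by positivity) (h1 _))
          ((summable_nat_add_iff N).2 summable_geometric_inv_two)
    _ = 2 * 2⁻¹ ^ N := by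
        rw [tsum_congr fun n => pow_add _ n N, tsum_mul_right, tsum_geometric_inv_two]

end GeometricWeights

namespace CFun

variable {X : Type*} [TopologicalSpace X]

def const : ℝ →+* CFun X :=
  (Pi.constRingHom X ℝ).codRestrict (CFun X) fun _ => continuous_const

@[simp] lemma const_apply (r : ℝ) (x : X) : ((const r : CFun X) : X → ℝ) x = r := rfl

lemma isUnit_of_forall_ne_zero {f : CFun X} (hf : ∀ x, (f : X → ℝ) x ≠ 0) : IsUnit f :=
  IsUnit.of_mul_eq_one ⟨fun x => ((f : X → ℝ) x)⁻¹, f.2.inv₀ hf⟩ <|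
    Subtype.ext <| funext fun x => mul_inv_cancel₀ (hf x)

lemma map_const (ψ : CFun X →+* ℝ) (r : ℝ) : ψ (const r) = r :=
  RingHom.congr_fun (Subsingleton.elim (ψ.comp const) (RingHom.id ℝ)) r

lemma sub_const_mem_ker (ψ : CFun X →+* ℝ) (f : CFun X) : f - const (ψ f) ∈ RingHom.ker ψ := by
  simp [RingHom.mem_ker, map_const]

lemma map_nonneg (ψ : CFun X →+* ℝ) {f : CFun X} (hf : ∀ x, 0 ≤ (f : X → ℝ) x) : 0 ≤ ψ f := by
  let s : CFun X := ⟨fun x => √((f : X → ℝ) x), f.2.sqrt⟩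
  have hs : s * s = f := Subtype.ext <| funext fun x => Real.mul_self_sqrt (hf x)
  rw [← hs, map_mul]
  exact mul_self_nonneg _

lemma map_mono (ψ : CFun X →+* ℝ) {f g : CFun X}
    (h : ∀ x, (f : X → ℝ) x ≤ (g : X → ℝ) x) : ψ f ≤ ψ g := by
  simpa using map_nonneg ψ (f := g - f) fun x => by simpa using h x

def HasCountableInterZeros (I : Ideal (CFun X)) : Prop :=
  ∀ k : ℕ → CFun X, (∀ n, k n ∈ I) → ∃ x, ∀ n, (k n : X → ℝ) x = 0

theorem hasCountableInterZeros_ker (ψ : CFun X →+* ℝ) :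
    HasCountableInterZeros (RingHom.ker ψ) := by
  intro k hk
  by_contra! hne
  let a : ℕ → CFun X := fun n =>
    k n * (k n * ⟨fun x => (1 + (k n : X → ℝ) x ^ 2)⁻¹,
      show Continuous fun x => (1 + (k n : X → ℝ) x ^ 2)⁻¹ from
        (continuous_const.add ((k n).2.pow 2)).inv₀ fun x => by dsimp; positivity⟩)
  have ha : ∀ n x, (a n : X → ℝ) x = (k n : X → ℝ) x ^ 2 / (1 + (k n : X → ℝ) x ^ 2) :=
    fun n x => by simp [a, sq, div_eq_mul_inv, mul_assoc]
  have ha0 : ∀ n x, 0 ≤ (a n : X → ℝ) x := fun n x => by rw [ha]; positivity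
  have ha1 : ∀ n x, (a n : X → ℝ) x ≤ 1 := fun n x => by
    rw [ha, div_le_one (by positivity)]; linarith
  have hψa : ∀ n, ψ (a n) = 0 := fun n => by
    simp only [a, map_mul, (RingHom.mem_ker).1 (hk n), zero_mul]
  let H : CFun X := ⟨fun x => ∑' n, 2⁻¹ ^ n * (a n : X → ℝ) x,
    continuous_tsum (fun n => continuous_const.mul (a n).2) summable_geometric_inv_two fun n x => by
      rw [norm_mul, norm_pow, norm_inv, Real.norm_two, Real.norm_of_nonneg (ha0 n x)]
      exact mul_le_of_le_one_right (by positivity) (ha1 n x)⟩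
  have hH : ∀ x, 0 < (H : X → ℝ) x := fun x => by
    obtain ⟨n, hn⟩ := hne x
    refine (summable_geometric_inv_two_mul (ha0 · x) (ha1 · x)).tsum_pos
      (fun n => mul_nonneg (by positivity) (ha0 n x)) n (mul_pos (by positivity) ?_)
    rw [ha]; positivity
  have hψH : 0 < ψ H := (map_nonneg ψ fun x => (hH x).le).lt_of_ne
    ((isUnit_of_forall_ne_zero fun x => (hH x).ne').map ψ).ne_zero.symm
  have hψH_le : ∀ N : ℕ, ψ H ≤ 2 * 2⁻¹ ^ N := fun N => by
    have := map_mono ψ (f := H)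
      (g := ∑ n ∈ Finset.range N, const (2⁻¹ ^ n) * a n + const (2 * 2⁻¹ ^ N)) fun x => by
        simpa [H, Finset.sum_apply] using
          tsum_geometric_inv_two_mul_le (ha0 · x) (ha1 · x) N
    simpa [map_const, hψa] using this
  have hlim : Tendsto (fun N : ℕ => 2 * (2⁻¹ : ℝ) ^ N) atTop (𝓝 0) := by
    simpa using (tendsto_pow_atTop_nhds_zero_of_lt_one (r := (2⁻¹ : ℝ))
      (by norm_num) (by norm_num)).const_mul 2
  exact hψH.not_ge (ge_of_tendsto' hlim hψH_le)

lemma mem_idealB_of_mem {I : Ideal (CFun X)} {g : CFun X} (hg : g ∈ I) : inclB X g ∈ idealB I :=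
  ⟨fun _ => g, fun _ => hg, fun _ => tendsto_const_nhds⟩

theorem mem_of_mem_idealB {I : Ideal (CFun X)} (hI : HasCountableInterZeros I) {g : CFun X}
    {r : ℝ} (hr : g - const r ∈ I) (hg : inclB X g ∈ idealB I) : g ∈ I := by
  obtain ⟨u, huI, hu⟩ := hg
  obtain ⟨x, hx⟩ := hI (fun n => g - const r - u n) fun n => I.sub_mem hr (huI n)
  have hux : Tendsto (fun n => (u n : X → ℝ) x) atTop (𝓝 ((g : X → ℝ) x - r)) :=
    tendsto_const_nhds.congr fun n => by
      linarith [show (g : X → ℝ) x - r - (u n : X → ℝ) x = 0 by simpa using hx n]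
  have hgx : Tendsto (fun n => (u n : X → ℝ) x) atTop (𝓝 ((g : X → ℝ) x)) := hu x
  have hr0 : r = 0 := by linarith [tendsto_nhds_unique hgx hux]
  simpa [hr0] using hr

theorem hasCountableInterZeros_of_mem_idealB_imp_mem {I : Ideal (CFun X)} (hI : I ≠ ⊤)
    (hclosed : ∀ g : CFun X, inclB X g ∈ idealB I → g ∈ I) : HasCountableInterZeros I := by
  intro k hk
  by_contra! hne
  let v : ℕ → CFun X := fun m => const ((m : ℝ) + 1) * ∑ j ∈ Finset.range m, k j * k j
  have hv : ∀ m x, (v m : X → ℝ) x = ((m : ℝ) + 1) * ∑ j ∈ Finset.range m, (k j : X → ℝ) x ^ 2 :=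
    fun m x => by simp [v, Finset.sum_apply, sq]
  -- `u m = min (v m) 1`, written as a multiple of `v m`
  let u : ℕ → CFun X := fun m => v m * ⟨fun x => (max ((v m : X → ℝ) x) 1)⁻¹,
    show Continuous fun x => (max ((v m : X → ℝ) x) 1)⁻¹ from
      ((v m).2.max continuous_const).inv₀ fun x => (lt_max_of_lt_right one_pos).ne'⟩
  have hu : ∀ x, ∀ᶠ m in atTop, (u m : X → ℝ) x = 1 := fun x => by
    obtain ⟨n, hn⟩ := hne x
    have hc : 0 < (k n : X → ℝ) x ^ 2 := by positivity
    filter_upwards [eventually_gt_atTop n,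
      tendsto_natCast_atTop_atTop.eventually_ge_atTop ((k n : X → ℝ) x ^ 2)⁻¹] with m hnm hm
    have h1 : 1 ≤ (v m : X → ℝ) x := by
      rw [hv]
      calc (1 : ℝ) = ((k n : X → ℝ) x ^ 2)⁻¹ * (k n : X → ℝ) x ^ 2 :=
            (inv_mul_cancel₀ hc.ne').symm
        _ ≤ ((m : ℝ) + 1) * (k n : X → ℝ) x ^ 2 := by gcongr; linarith
        _ ≤ _ := by
            gcongr
            exact Finset.single_le_sum (f := fun j => (k j : X → ℝ) x ^ 2)
              (fun j _ => sq_nonneg _) (Finset.mem_range.2 hnm)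
    simp [u, max_eq_left h1, mul_inv_cancel₀ (one_pos.trans_le h1).ne']
  refine hI ((Ideal.eq_top_iff_one I).2 (hclosed 1 ⟨u, fun m => ?_, fun x => ?_⟩))
  · exact I.mul_mem_right _ (I.mul_mem_left _ (I.sum_mem fun j _ => I.mul_mem_left _ (hk j)))
  · exact tendsto_const_nhds.congr' ((hu x).mono fun m hm => hm.symm)

theorem exists_le_abs_sub_of_sub_const_notMem {M : Ideal (CFun X)} (hM : M.IsMaximal)
    (hC : HasCountableInterZeros M) {f : CFun X} {r : ℝ} (hf : f - const r ∉ M) :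
    ∃ δ > 0, ∃ j ∈ M, ∀ x, (j : X → ℝ) x = 0 → δ ≤ |(f : X → ℝ) x - r| := by
  obtain ⟨h, i, hi, hhi⟩ := hM.exists_inv hf
  have hd : Continuous fun x => |(f : X → ℝ) x - r| := (f.2.sub continuous_const).abs
  let p : ℕ → CFun X := fun n => ⟨fun x => max (|(f : X → ℝ) x - r| - (n + 1 : ℝ)⁻¹) 0,
    show Continuous fun x => max (|(f : X → ℝ) x - r| - (n + 1 : ℝ)⁻¹) 0 from
      (hd.sub continuous_const).max continuous_const⟩
  let q : ℕ → CFun X := fun n => ⟨fun x => max ((n + 1 : ℝ)⁻¹ - |(f : X → ℝ) x - r|) 0,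
    show Continuous fun x => max ((n + 1 : ℝ)⁻¹ - |(f : X → ℝ) x - r|) 0 from
      (continuous_const.sub hd).max continuous_const⟩
  by_cases hq : ∃ n, q n ∈ M
  · obtain ⟨n, hn⟩ := hq
    refine ⟨(n + 1 : ℝ)⁻¹, by positivity, q n, hn, fun x hx => ?_⟩
    simpa [q, sub_nonpos] using hx
  · simp only [not_exists] at hq
    have hp : ∀ n, p n ∈ M := fun n => by
      have hpq : p n * q n = 0 := Subtype.ext <| funext fun x => by
        simp [p, q, le_total]
      exact (hM.isPrime.mem_or_mem (hpq ▸ M.zero_mem)).resolve_right (hq n)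
    obtain ⟨x, hx⟩ := hC (fun n => i * i + p n * p n)
      fun n => M.add_mem (M.mul_mem_left _ hi) (M.mul_mem_left _ (hp n))
    have hx' : ∀ n, (i : X → ℝ) x = 0 ∧ (p n : X → ℝ) x = 0 := fun n =>
      mul_self_add_mul_self_eq_zero.1 (by simpa using hx n)
    have hfx : |(f : X → ℝ) x - r| ≤ 0 :=
      ge_of_tendsto' tendsto_one_div_add_atTop_nhds_zero_nat fun n => by
        simpa [p] using (hx' n).2
    have := congrArg (fun w : CFun X => (w : X → ℝ) x) hhi
    simp [(hx' 0).1, sub_eq_zero.1 (abs_nonpos_iff.1 hfx)] at this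

theorem exists_sub_const_mem {M : Ideal (CFun X)} (hM : M.IsMaximal)
    (hC : HasCountableInterZeros M) (f : CFun X) : ∃ r : ℝ, f - const r ∈ M := by
  by_contra! hf
  choose δ hδ j hj hjδ using fun r => exists_le_abs_sub_of_sub_const_notMem hM hC (hf r)
  obtain ⟨s, hs, hcover⟩ := TopologicalSpace.countable_cover_nhds
    fun r => Metric.ball_mem_nhds r (hδ r)
  have hmem : ∀ y, ∃ r ∈ s, y ∈ Metric.ball r (δ r) := fun y =>
    by simpa using hcover.superset (Set.mem_univ y)
  obtain ⟨e, rfl⟩ := hs.exists_eq_range (let ⟨r, hr, _⟩ := hmem 0; ⟨r, hr⟩)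
  obtain ⟨x, hx⟩ := hC (fun n => j (e n)) fun n => hj _
  obtain ⟨_, ⟨n, rfl⟩, hn⟩ := hmem ((f : X → ℝ) x)
  exact (hjδ (e n) x (hx n)).not_gt (by simpa [Real.dist_eq] using hn)

theorem nonempty_quotient_ringEquiv_real {M : Ideal (CFun X)} (hM : M ≠ ⊤)
    (h : ∀ f : CFun X, ∃ r : ℝ, f - const r ∈ M) : Nonempty ((CFun X ⧸ M) ≃+* ℝ) := by
  have : Nontrivial (CFun X ⧸ M) := Ideal.Quotient.nontrivial_iff.2 hM
  let π : ℝ →+* CFun X ⧸ M := (Ideal.Quotient.mk M).comp const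
  refine ⟨(RingEquiv.ofBijective π ⟨π.injective, fun y => ?_⟩).symm⟩
  obtain ⟨f, rfl⟩ := Ideal.Quotient.mk_surjective y
  obtain ⟨r, hr⟩ := h f
  exact ⟨r, (Ideal.Quotient.eq.2 hr).symm⟩

end CFun

theorem real_maximal_iff_contraction {X : Type*} [TopologicalSpace X]
    (M : Ideal (CFun X)) (hM : M.IsMaximal) :
    Nonempty ((CFun X ⧸ M) ≃+* ℝ) ↔
      ∀ g : CFun X, g ∈ M ↔ inclB X g ∈ idealB M := by
  constructor
  · rintro ⟨e⟩ g
    let ψ : CFun X →+* ℝ := e.toRingHom.comp (Ideal.Quotient.mk M)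
    have hker : RingHom.ker ψ = M := by
      rw [RingHom.ker_comp_of_injective _ e.injective, Ideal.mk_ker]
    refine ⟨CFun.mem_idealB_of_mem, fun hg => ?_⟩
    rw [← hker] at hg ⊢
    exact CFun.mem_of_mem_idealB (CFun.hasCountableInterZeros_ker ψ)
      (CFun.sub_const_mem_ker ψ g) hg
  · intro h
    have hC := CFun.hasCountableInterZeros_of_mem_idealB_imp_mem hM.ne_top fun g => (h g).2
    exact CFun.nonempty_quotient_ringEquiv_real hM.ne_top (CFun.exists_sub_const_mem hM hC)
end

section
/- If M is a real maximal ideal of C(X) and {gₙ} is a countable family in M, then the function s = Σₙ (2⁻ⁿ ∧ |gₙ|) is continuous, belongs to M_B ∩ C(X), and Z(s) = ⋂ₙ Z(gₙ). -/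
open Filter Topology

theorem sum_min_zero_sets {X : Type*} [TopologicalSpace X]
    (M : Ideal (CFun X)) (hM : M.IsMaximal)
    (hreal : Nonempty ((CFun X ⧸ M) ≃+* ℝ))
    (g : ℕ → CFun X) (hg : ∀ n, g n ∈ M) :
    ∃ hs : (fun x => ∑' n : ℕ, min (((1:ℝ)/2) ^ (n + 1)) |(g n : X → ℝ) x|) ∈ CFun X,
      inclB X ⟨_, hs⟩ ∈ idealB M ∧
      {x : X | ∑' n : ℕ, min (((1:ℝ)/2) ^ (n + 1)) |(g n : X → ℝ) x| = 0}
        = ⋂ n : ℕ, {x : X | (g n : X → ℝ) x = 0} := by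
  classical
  obtain ⟨φ⟩ := hreal
  set ψ : CFun X →+* ℝ := φ.toRingHom.comp (Ideal.Quotient.mk M) with hψ
  have hker : ∀ f : CFun X, ψ f = 0 ↔ f ∈ M := by
    intro f
    rw [← Ideal.Quotient.eq_zero_iff_mem (I := M)]
    constructor
    · intro h
      apply φ.injective
      simpa [hψ] using h
    · intro h
      simp [hψ, RingHom.comp_apply, h]
  have hpos : ∀ f : CFun X, (∀ x, 0 ≤ (f : X → ℝ) x) → 0 ≤ ψ f := by
    intro f hf
    have hc : Continuous fun x => Real.sqrt ((f : X → ℝ) x) :=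
      Real.continuous_sqrt.comp f.2
    set h : CFun X := ⟨fun x => Real.sqrt ((f : X → ℝ) x), hc⟩ with hh
    have : h * h = f := by
      apply Subtype.ext
      funext x
      exact Real.mul_self_sqrt (hf x)
    rw [← this, map_mul]
    exact mul_self_nonneg _
  have hmono : ∀ f f' : CFun X, (∀ x, (f : X → ℝ) x ≤ (f' : X → ℝ) x) → ψ f ≤ ψ f' := by
    intro f f' hle
    have := hpos (f' - f) (fun x => by
      have : ((f' - f : CFun X) : X → ℝ) x = (f' : X → ℝ) x - (f : X → ℝ) x := rfl
      rw [this]; linarith [hle x])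
    rw [map_sub] at this
    linarith
  -- the individual terms, as elements of CFun X
  set m : ℕ → CFun X := fun n =>
    ⟨fun x => min (((1:ℝ)/2) ^ (n + 1)) |(g n : X → ℝ) x|,
      continuous_const.min (g n).2.abs⟩ with hm
  have hm_nonneg : ∀ n x, 0 ≤ (m n : X → ℝ) x := fun n x =>
    le_min (by positivity) (abs_nonneg _)
  have hm_le : ∀ n x, (m n : X → ℝ) x ≤ ((1:ℝ)/2) ^ (n + 1) := fun n x => min_le_left _ _
  have habs : ∀ n, ψ ⟨fun x => |(g n : X → ℝ) x|, (g n).2.abs⟩ = 0 := by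
    intro n
    set a : CFun X := ⟨fun x => |(g n : X → ℝ) x|, (g n).2.abs⟩ with ha
    have h2 : a * a = g n * g n := by
      apply Subtype.ext
      funext x
      exact abs_mul_abs_self _
    have hgz : ψ (g n) = 0 := (hker _).2 (hg n)
    have : ψ a * ψ a = 0 := by
      rw [← map_mul, h2, map_mul, hgz, mul_zero]
    exact (mul_self_eq_zero).1 this
  have hmM : ∀ n, m n ∈ M := by
    intro n
    apply (hker _).1
    have h1 : 0 ≤ ψ (m n) := hpos _ (hm_nonneg n)
    have h2 : ψ (m n) ≤ ψ ⟨fun x => |(g n : X → ℝ) x|, (g n).2.abs⟩ :=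
      hmono _ _ (fun x => min_le_right _ _)
    rw [habs n] at h2
    linarith
  -- summability
  have hgeo : Summable fun n : ℕ => ((1:ℝ)/2) ^ (n + 1) := by
    simpa [pow_succ] using
      (summable_geometric_of_lt_one (by norm_num : (0:ℝ) ≤ 1/2) (by norm_num)).mul_right ((1:ℝ)/2)
  have hsummable : ∀ x : X, Summable fun n : ℕ => (m n : X → ℝ) x :=
    fun x => Summable.of_nonneg_of_le (fun n => hm_nonneg n x) (fun n => hm_le n x) hgeo
  have hs : (fun x => ∑' n : ℕ, min (((1:ℝ)/2) ^ (n + 1)) |(g n : X → ℝ) x|) ∈ CFun X := by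
    apply continuous_tsum (f := fun n x => (m n : X → ℝ) x) (fun n => (m n).2) hgeo
    intro n x
    rw [Real.norm_eq_abs, abs_of_nonneg (hm_nonneg n x)]
    exact hm_le n x
  refine ⟨hs, ?_, ?_⟩
  · refine ⟨fun N => ∑ k ∈ Finset.range N, m k, fun N => Ideal.sum_mem M (fun k _ => hmM k), ?_⟩
    intro x
    have hco : ∀ N, ((∑ k ∈ Finset.range N, m k : CFun X) : X → ℝ) x
        = ∑ k ∈ Finset.range N, (m k : X → ℝ) x := by
      intro N
      rw [show ((∑ k ∈ Finset.range N, m k : CFun X) : X → ℝ)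
        = ∑ k ∈ Finset.range N, ((m k : X → ℝ)) from map_sum ((CFun X).subtype) _ _]
      simp
    simp only [hco]
    exact (hsummable x).hasSum.tendsto_sum_nat
  · ext x
    simp only [Set.mem_setOf_eq, Set.mem_iInter]
    constructor
    · intro h0 n
      have hterm : (m n : X → ℝ) x = 0 := by
        have hle := Summable.le_tsum (hsummable x) n (fun j _ => hm_nonneg j x)
        have := hm_nonneg n x
        have h0' : ∑' k, (m k : X → ℝ) x = 0 := h0
        linarith [hle.trans_eq h0']
      by_contra hne
      have : 0 < min (((1:ℝ)/2) ^ (n + 1)) |(g n : X → ℝ) x| :=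
        lt_min (by positivity) (abs_pos.2 hne)
      have : (0:ℝ) < (m n : X → ℝ) x := this
      rw [hterm] at this
      exact lt_irrefl 0 this
    · intro hall
      have : ∀ n : ℕ, min (((1:ℝ)/2) ^ (n + 1)) |(g n : X → ℝ) x| = 0 := by
        intro n
        rw [hall n]
        simp
      simp only [this]
      exact tsum_zero
end

section
/- If M is a hyper-real maximal ideal of C(X) (i.e., a maximal ideal that is not real), then M_B = B₁(X); in particular M_B is not a proper ideal. -/
open Filter Topology

section HyperAux

variable {X : Type*} [TopologicalSpace X]

private lemma cont_coe (f : CFun X) : Continuous (f : X → ℝ) := f.2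

private lemma div_sub_one_eq {a e : ℝ} (h : a + e ≠ 0) :
    a * (a + e)⁻¹ - 1 = -(e / (a + e)) := by
  have h1 : a * (a + e)⁻¹ - 1 = (a - (a + e)) * (a + e)⁻¹ := by
    rw [sub_mul, mul_inv_cancel₀ h]
  rw [h1, div_eq_mul_inv]
  ring

private lemma two_sq_zero {a b : ℝ} (h : a * a + b * b = 0) : a = 0 ∧ b = 0 := by
  constructor <;> nlinarith [mul_self_nonneg a, mul_self_nonneg b]

private lemma three_sq_zero {a b c : ℝ} (h : a * a + b * b + c * c = 0) :
    a = 0 ∧ b = 0 ∧ c = 0 := by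
  refine ⟨?_, ?_, ?_⟩ <;> nlinarith [mul_self_nonneg a, mul_self_nonneg b, mul_self_nonneg c]

private lemma large_of_inv {cv dv d nn : ℝ} (h1 : cv * dv = 1) (h2 : dv ≤ d)
    (h3 : 0 ≤ cv) (h4 : 0 ≤ dv) (h5 : d * (nn + 1) = 1) (h6 : 0 ≤ nn) : nn ≤ cv := by
  have hd : 0 < d := by nlinarith
  have hcd : 1 ≤ cv * d := by nlinarith [mul_le_mul_of_nonneg_left h2 h3]
  nlinarith [mul_le_mul_of_nonneg_left h2 h3]

private lemma false_of_unit_mem (M : Ideal (CFun X)) (hM : M.IsMaximal)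
    {m : CFun X} (hm : m ∈ M) (h : ∀ x, (m : X → ℝ) x ≠ 0) : False := by
  have hinv : Continuous fun x => ((m : X → ℝ) x)⁻¹ := (cont_coe m).inv₀ h
  have h1 : (1 : CFun X) ∈ M := by
    have h2 := M.mul_mem_left (⟨_, hinv⟩ : CFun X) hm
    have h3 : (⟨_, hinv⟩ : CFun X) * m = 1 := by
      apply Subtype.ext; funext x
      exact inv_mul_cancel₀ (h x)
    rwa [h3] at h2
  exact hM.ne_top ((Ideal.eq_top_iff_one M).mpr h1)

private lemma mem_of_vanishing (M : Ideal (CFun X)) (hM : M.IsMaximal)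
    {m : CFun X} (hm : m ∈ M) (f : CFun X)
    (h : ∀ x, (m : X → ℝ) x = 0 → (f : X → ℝ) x = 0) : f ∈ M := by
  by_contra hf
  obtain ⟨c, i, hiM, hci⟩ := hM.exists_inv hf
  have hw : m * m + i * i ∈ M := M.add_mem (M.mul_mem_left m hm) (M.mul_mem_left i hiM)
  apply false_of_unit_mem M hM hw
  intro x hx
  have hx' : (m : X → ℝ) x * (m : X → ℝ) x + (i : X → ℝ) x * (i : X → ℝ) x = 0 := hx
  obtain ⟨hm0, hi0⟩ := two_sq_zero hx' 
  have h1 : (c : X → ℝ) x * (f : X → ℝ) x + (i : X → ℝ) x = 1 :=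
    congrFun (congrArg Subtype.val hci) x
  rw [h x hm0, mul_zero, hi0, add_zero] at h1
  exact zero_ne_one h1

private def constHom (X : Type*) [TopologicalSpace X] : ℝ →+* CFun X where
  toFun r := ⟨fun _ => r, continuous_const⟩
  map_one' := rfl
  map_mul' _ _ := rfl
  map_zero' := rfl
  map_add' _ _ := rfl

private def gSd (g : CFun X) (r : ℝ) : CFun X :=
  ⟨fun x => min ((g : X → ℝ) x) r - r, ((cont_coe g).min continuous_const).sub continuous_const⟩

private def gTd (g : CFun X) (r : ℝ) : CFun X :=
  ⟨fun x => max ((g : X → ℝ) x) r - r, ((cont_coe g).max continuous_const).sub continuous_const⟩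

set_option maxHeartbeats 1000000 in
private lemma exists_vanishing_seq (M : Ideal (CFun X)) (hM : M.IsMaximal)
    (hhyp : ¬ Nonempty ((CFun X ⧸ M) ≃+* ℝ)) :
    ∃ f : ℕ → CFun X, (∀ n, f n ∈ M) ∧ ∀ x, ∃ n, (f n : X → ℝ) x ≠ 0 := by
  haveI := hM
  -- Step 1: there is g whose class avoids every real constant
  have hgex : ∃ g : CFun X, ∀ r : ℝ, g - constHom X r ∉ M := by
    by_contra hcon
    push_neg at hcon
    apply hhyp
    set φ := (Ideal.Quotient.mk M).comp (constHom X) with hφ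
    have hsurj : Function.Surjective φ := by
      intro y
      obtain ⟨g, rfl⟩ := Ideal.Quotient.mk_surjective y
      obtain ⟨r, hr⟩ := hcon g
      refine ⟨r, ?_⟩
      have h2 := M.neg_mem hr
      rw [neg_sub] at h2
      exact Ideal.Quotient.eq.mpr h2
    have hinj : Function.Injective φ := φ.injective
    exact ⟨(RingEquiv.ofBijective φ ⟨hinj, hsurj⟩).symm⟩
  obtain ⟨g, hg⟩ := hgex
  have htotal : ∀ r : ℝ, gSd g r ∈ M ∨ gTd g r ∈ M := by
    intro r
    have hprod : gSd g r * gTd g r = 0 := by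
      apply Subtype.ext; funext x
      show (min ((g : X → ℝ) x) r - r) * (max ((g : X → ℝ) x) r - r) = 0
      rcases le_total ((g : X → ℝ) x) r with h | h
      · rw [max_eq_right h]; ring
      · rw [min_eq_right h]; ring
    have hPM : gSd g r * gTd g r ∈ M := by rw [hprod]; exact M.zero_mem
    exact hM.isPrime.mem_or_mem hPM
  -- Case A : g is infinitely large
  by_cases hA : ∀ n : ℕ, gSd g n ∈ M
  · refine ⟨fun n => gSd g n, hA, fun x => ?_⟩
    obtain ⟨n, hn⟩ := exists_nat_gt ((g : X → ℝ) x)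
    refine ⟨n, ?_⟩
    show min ((g : X → ℝ) x) (n : ℝ) - n ≠ 0
    rw [min_eq_left hn.le]
    intro h; linarith [hn, sub_eq_zero.mp h]
  push_neg at hA
  obtain ⟨n₀, hn₀⟩ := hA
  have hn₀T : gTd g n₀ ∈ M := (htotal n₀).resolve_left hn₀
  -- Case B : g is infinitely small
  by_cases hB : ∀ n : ℕ, gTd g (-(n : ℝ)) ∈ M
  · refine ⟨fun n => gTd g (-(n : ℝ)), hB, fun x => ?_⟩
    obtain ⟨n, hn⟩ := exists_nat_gt (-((g : X → ℝ) x))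
    refine ⟨n, ?_⟩
    show max ((g : X → ℝ) x) (-(n : ℝ)) - (-(n : ℝ)) ≠ 0
    have hlt : -(n : ℝ) ≤ (g : X → ℝ) x := by linarith
    rw [max_eq_left hlt]
    intro h; have := sub_eq_zero.mp h; linarith
  push_neg at hB
  obtain ⟨n₁, hn₁⟩ := hB
  have hn₁S : gSd g (-(n₁ : ℝ)) ∈ M := (htotal _).resolve_right hn₁
  -- Case C : the cut determined by g
  set S : Set ℝ := {r | gSd g r ∈ M} with hSdef
  have hSne : S.Nonempty := ⟨-(n₁ : ℝ), hn₁S⟩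
  have hSbd' : ∀ s ∈ S, s ≤ (n₀ : ℝ) := by
    intro s hs
    by_contra hcon
    push_neg at hcon
    have hw : gSd g s * gSd g s + gTd g n₀ * gTd g n₀ ∈ M :=
      M.add_mem (M.mul_mem_left _ hs) (M.mul_mem_left _ hn₀T)
    apply false_of_unit_mem M hM hw
    intro x hx
    have hx' : (min ((g : X → ℝ) x) s - s) * (min ((g : X → ℝ) x) s - s)
        + (max ((g : X → ℝ) x) (n₀ : ℝ) - n₀) * (max ((g : X → ℝ) x) (n₀ : ℝ) - n₀) = 0 := hx
    obtain ⟨e1, e2⟩ := two_sq_zero hx' 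
    have hs1 : s ≤ (g : X → ℝ) x := by
      rcases le_total ((g : X → ℝ) x) s with h | h
      · rw [min_eq_left h] at e1; linarith [sub_eq_zero.mp e1]
      · exact h
    have hs2 : (g : X → ℝ) x ≤ (n₀ : ℝ) := by
      rcases le_total ((g : X → ℝ) x) (n₀ : ℝ) with h | h
      · exact h
      · rw [max_eq_left h] at e2; linarith [sub_eq_zero.mp e2]
    linarith
  have hbdd : BddAbove S := ⟨(n₀ : ℝ), fun s hs => hSbd' s hs⟩
  set r₀ : ℝ := sSup S with hr₀
  obtain ⟨c, i, hiM, hci⟩ := hM.exists_inv (hg r₀)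
  refine ⟨fun n => ⟨fun x => min |(c : X → ℝ) x| n - n,
    (((cont_coe c).abs.min continuous_const).sub continuous_const)⟩, ?_, ?_⟩
  · intro n
    set δ : ℝ := 1 / (n + 1) with hδ
    have hδpos : 0 < δ := by positivity
    have ht : gTd g (r₀ + δ) ∈ M := by
      rcases htotal (r₀ + δ) with h | h
      · exfalso
        have hle : r₀ + δ ≤ r₀ := le_csSup hbdd h
        linarith
      · exact h
    obtain ⟨s, hsS, hslt⟩ := exists_lt_of_lt_csSup hSne (show r₀ - δ < r₀ by linarith)
    have hsle : s ≤ r₀ := le_csSup hbdd hsS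
    have hw : gSd g s * gSd g s + gTd g (r₀ + δ) * gTd g (r₀ + δ) + i * i ∈ M :=
      M.add_mem (M.add_mem (M.mul_mem_left _ hsS) (M.mul_mem_left _ ht)) (M.mul_mem_left _ hiM)
    apply mem_of_vanishing M hM hw
    intro x hx
    have hx' : (min ((g : X → ℝ) x) s - s) * (min ((g : X → ℝ) x) s - s)
        + (max ((g : X → ℝ) x) (r₀ + δ) - (r₀ + δ)) * (max ((g : X → ℝ) x) (r₀ + δ) - (r₀ + δ))
        + (i : X → ℝ) x * (i : X → ℝ) x = 0 := hx
    obtain ⟨e1, e2, e3⟩ := three_sq_zero hx' 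
    have hs1 : s ≤ (g : X → ℝ) x := by
      rcases le_total ((g : X → ℝ) x) s with h | h
      · rw [min_eq_left h] at e1; linarith [sub_eq_zero.mp e1]
      · exact h
    have hs2 : (g : X → ℝ) x ≤ r₀ + δ := by
      rcases le_total ((g : X → ℝ) x) (r₀ + δ) with h | h
      · exact h
      · rw [max_eq_left h] at e2; linarith [sub_eq_zero.mp e2]
    have hval : (c : X → ℝ) x * ((g : X → ℝ) x - r₀) + (i : X → ℝ) x = 1 :=
      congrFun (congrArg Subtype.val hci) x
    rw [e3, add_zero] at hval
    have habs : |(c : X → ℝ) x| * |(g : X → ℝ) x - r₀| = 1 := by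
      rw [← abs_mul, hval, abs_one]
    have hdsmall : |(g : X → ℝ) x - r₀| ≤ δ := by
      rw [abs_le]; constructor <;> linarith
    have hδmul : δ * ((n : ℝ) + 1) = 1 := by
      rw [hδ]; field_simp
    have hclarge : (n : ℝ) ≤ |(c : X → ℝ) x| :=
      large_of_inv habs hdsmall (abs_nonneg _) (abs_nonneg _) hδmul (Nat.cast_nonneg n)
    show min |(c : X → ℝ) x| (n : ℝ) - n = 0
    rw [min_eq_right hclarge, sub_self]
  · intro x
    obtain ⟨n, hn⟩ := exists_nat_gt |(c : X → ℝ) x|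
    refine ⟨n, ?_⟩
    show min |(c : X → ℝ) x| (n : ℝ) - n ≠ 0
    rw [min_eq_left hn.le]
    intro h; linarith [sub_eq_zero.mp h]

end HyperAux

set_option maxHeartbeats 1000000 in
theorem hyperreal_idealB_top {X : Type*} [TopologicalSpace X]
    (M : Ideal (CFun X)) (hM : M.IsMaximal)
    (hhyp : ¬ Nonempty ((CFun X ⧸ M) ≃+* ℝ)) :
    idealB M = (Set.univ : Set (B1 X)) := by
  obtain ⟨f, hfM, hfx⟩ := exists_vanishing_seq M hM hhyp
  -- partial sums of squares
  have key : ∃ m : ℕ → CFun X, (∀ n, m n ∈ M) ∧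
      ∀ x, Tendsto (fun n => (m n : X → ℝ) x) atTop (𝓝 1) := by
    set G : ℕ → CFun X := fun n => ∑ k ∈ Finset.range (n + 1), f k * f k with hG
    have hGM : ∀ n, G n ∈ M := fun n =>
      Ideal.sum_mem M fun k _ => M.mul_mem_left _ (hfM k)
    have hGstep : ∀ n, G (n + 1) = G n + f (n + 1) * f (n + 1) := by
      intro n
      simp only [hG]
      rw [Finset.sum_range_succ]
    have hGval : ∀ n x, (G n : X → ℝ) x
        = ∑ k ∈ Finset.range (n + 1), ((f k : X → ℝ) x) * ((f k : X → ℝ) x) := by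
      intro n x
      induction n with
      | zero => simp [hG, Finset.sum_range_one]
      | succ n ih =>
        rw [Finset.sum_range_succ, ← ih, hGstep]
        rfl
    have hGpos : ∀ n x, 0 ≤ (G n : X → ℝ) x := by
      intro n x
      rw [hGval]
      exact Finset.sum_nonneg fun k _ => mul_self_nonneg _
    have hden : ∀ n x, (G n : X → ℝ) x + 1 / ((n : ℝ) + 1) ≠ 0 := by
      intro n x
      have h1 := hGpos n x
      have h2 : (0 : ℝ) < 1 / ((n : ℝ) + 1) := by positivity
      linarith
    refine ⟨fun n => G n * ⟨fun x => ((G n : X → ℝ) x + 1 / ((n : ℝ) + 1))⁻¹,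
      (((cont_coe (G n)).add continuous_const).inv₀ (hden n))⟩,
      fun n => Ideal.mul_mem_right _ M (hGM n), fun x => ?_⟩
    obtain ⟨N, hN⟩ := hfx x
    have hc : 0 < (G N : X → ℝ) x := by
      rw [hGval]
      have hmem : N ∈ Finset.range (N + 1) := Finset.self_mem_range_succ N
      have hle : ((f N : X → ℝ) x) * ((f N : X → ℝ) x)
          ≤ ∑ k ∈ Finset.range (N + 1), ((f k : X → ℝ) x) * ((f k : X → ℝ) x) := by
        simpa using Finset.single_le_sum (f := fun k => ((f k : X → ℝ) x) * ((f k : X → ℝ) x))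
          (fun k _ => mul_self_nonneg _) hmem
      have hpos : 0 < ((f N : X → ℝ) x) * ((f N : X → ℝ) x) := mul_self_pos.mpr hN
      linarith
    have hmono : ∀ p q : ℕ, p ≤ q → (G p : X → ℝ) x ≤ (G q : X → ℝ) x := by
      intro p q hpq
      rw [hGval, hGval]
      apply Finset.sum_le_sum_of_subset_of_nonneg
      · exact Finset.range_subset_range.mpr (by omega)
      · intro k _ _; exact mul_self_nonneg _
    have hdiff : ∀ᶠ n in atTop, ‖(G n : X → ℝ) x * ((G n : X → ℝ) x + 1 / ((n : ℝ) + 1))⁻¹ - 1‖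
        ≤ (1 / ((n : ℝ) + 1)) / ((G N : X → ℝ) x) := by
      filter_upwards [eventually_ge_atTop N] with n hn
      have h1 : (G N : X → ℝ) x ≤ (G n : X → ℝ) x := hmono N n hn
      have h2 : (0 : ℝ) < 1 / ((n : ℝ) + 1) := by positivity
      have h3 : (0 : ℝ) < (G n : X → ℝ) x + 1 / ((n : ℝ) + 1) := by linarith
      have h5 : ((G n : X → ℝ) x + 1 / ((n : ℝ) + 1)) ≠ 0 := ne_of_gt h3
      have heq : (G n : X → ℝ) x * ((G n : X → ℝ) x + 1 / ((n : ℝ) + 1))⁻¹ - 1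
          = -((1 / ((n : ℝ) + 1)) / ((G n : X → ℝ) x + 1 / ((n : ℝ) + 1))) :=
        div_sub_one_eq h5
      rw [heq, norm_neg, Real.norm_eq_abs, abs_of_nonneg (by positivity)]
      gcongr
      linarith
    have h0 : Tendsto (fun n : ℕ => (1 / ((n : ℝ) + 1)) / ((G N : X → ℝ) x)) atTop (𝓝 0) := by
      simpa using tendsto_one_div_add_atTop_nhds_zero_nat.div_const ((G N : X → ℝ) x)
    have hz := squeeze_zero_norm' hdiff h0
    have h2 : Tendsto (fun n : ℕ =>
        ((G n : X → ℝ) x * ((G n : X → ℝ) x + 1 / ((n : ℝ) + 1))⁻¹ - 1) + 1) atTop (𝓝 (0 + 1)) :=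
      hz.add tendsto_const_nhds
    simpa using h2
  obtain ⟨m, hmM, hm1⟩ := key
  ext b
  simp only [Set.mem_univ, iff_true]
  obtain ⟨v, hv⟩ := b.2
  refine ⟨fun n => ⟨v n, (v n).continuous⟩ * m n,
    fun n => M.mul_mem_left _ (hmM n), fun x => ?_⟩
  have hmul := (hv x).mul (hm1 x)
  rw [mul_one] at hmul
  exact hmul
end

section
/- Every fixed maximal ideal M̂_p = {f ∈ B₁(X) : f(p) = 0} is a closed ideal of B₁(X), i.e., [M̂_p ∩ C(X)]_B = M̂_p. -/
open Filter Topology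

theorem fixed_maximal_is_closed {X : Type*} [TopologicalSpace X] (p : X) :
    idealB (Ideal.comap (inclB X) (RingHom.ker (evalB p)))
      = (↑(RingHom.ker (evalB p)) : Set (B1 X)) := by
  ext f
  constructor
  · rintro ⟨u, hu, hlim⟩
    have hp := hlim p
    have hz : ∀ n, (u n : X → ℝ) p = 0 := fun n => hu n
    have hp' : Tendsto (fun _ : ℕ => (0 : ℝ)) atTop (𝓝 ((f : X → ℝ) p)) := by
      simpa only [hz] using hp
    have : (f : X → ℝ) p = 0 := tendsto_nhds_unique hp' tendsto_const_nhds
    simpa [RingHom.mem_ker, evalB] using this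
  · intro hf
    have hfp : (f : X → ℝ) p = 0 := hf
    obtain ⟨u, hu⟩ := f.2
    refine ⟨fun n => ⟨(u n : X → ℝ) - fun _ => (u n : X → ℝ) p,
      ((u n).continuous.sub continuous_const : Continuous _)⟩, fun n => ?_, fun x => ?_⟩
    · show evalB p (inclB X _) = 0
      simp [evalB, inclB, Subring.inclusion]
    · have h1 := hu x
      have h2 := hu p
      rw [hfp] at h2
      simpa using h1.sub h2
end

section
/- If M is a real maximal ideal of C(X), then M_B is maximal among closed ideals of B₁(X): for any closed ideal J of B₁(X) with M_B ⊆ J, one has M_B = J. -/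
open Filter Topology

theorem idealB_maximal_among_closed {X : Type*} [TopologicalSpace X]
    (M : Ideal (CFun X)) (hM : IsRealMax M)
    (J : Ideal (B1 X)) (hJ : J ≠ ⊤)
    (hclosed : idealB (Ideal.comap (inclB X) J) = (↑J : Set (B1 X)))
    (hMJ : idealB M ⊆ (↑J : Set (B1 X))) :
    idealB M = (↑J : Set (B1 X)) := by
  have hMle : M ≤ Ideal.comap (inclB X) J := by
    intro f hf
    exact hMJ ⟨fun _ => f, fun _ => hf, fun x => tendsto_const_nhds⟩
  have hne : Ideal.comap (inclB X) J ≠ ⊤ := by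
    intro h
    apply hJ
    rw [Ideal.eq_top_iff_one] at h ⊢
    simpa using Ideal.mem_comap.mp h
  have heq : M = Ideal.comap (inclB X) J := hM.1.eq_of_le hne hMle
  rw [heq]
  exact hclosed
end

section
/- If M̂ is a real maximal ideal of B₁(X), then M̂ ∩ C(X) is a real maximal ideal of C(X). -/
open Filter Topology

theorem real_maximal_contraction {X : Type*} [TopologicalSpace X]
    (N : Ideal (B1 X)) (hN : IsRealMaxB N) :
    IsRealMax (Ideal.comap (inclB X) N) := by
  obtain ⟨hmax, ⟨φ⟩⟩ := hN
  let constC : ℝ →+* CFun X :=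
    { toFun := fun r => ⟨fun _ => r, continuous_const⟩
      map_one' := rfl
      map_mul' := fun _ _ => rfl
      map_zero' := rfl
      map_add' := fun _ _ => rfl }
  let ψ : CFun X →+* ℝ :=
    (φ : B1 X ⧸ N ≃+* ℝ).toRingHom.comp ((Ideal.Quotient.mk N).comp (inclB X))
  have hconst : ∀ r : ℝ, ψ (constC r) = r := by
    intro r
    have : ψ.comp constC = RingHom.id ℝ := Subsingleton.elim _ _
    calc ψ (constC r) = (ψ.comp constC) r := rfl
    _ = r := by rw [this]; rfl
  have hsurj : Function.Surjective ψ := fun r => ⟨constC r, hconst r⟩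
  have hker : Ideal.comap (inclB X) N = RingHom.ker ψ := by
    ext f
    rw [Ideal.mem_comap, RingHom.mem_ker]
    constructor
    · intro h
      have : (Ideal.Quotient.mk N) (inclB X f) = 0 :=
        (Ideal.Quotient.eq_zero_iff_mem).mpr h
      simp [ψ, this]
    · intro h
      have h0 : (φ : B1 X ⧸ N ≃+* ℝ) ((Ideal.Quotient.mk N) (inclB X f)) = 0 := h
      have : (Ideal.Quotient.mk N) (inclB X f) = 0 :=
        φ.injective (by simpa using h0)
      exact (Ideal.Quotient.eq_zero_iff_mem).mp this
  refine ⟨?_, ⟨?_⟩⟩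
  · rw [hker]
    exact RingHom.ker_isMaximal_of_surjective ψ hsurj
  · exact (Ideal.quotEquivOfEq hker).trans (RingHom.quotientKerEquivOfSurjective hsurj)
end

section
/- If M̂ is a maximal ideal of B₁(X) such that for every f ∈ B₁(X) there exists r ∈ ℝ with f − r ∈ M̂, then the map φ : C(X)/(M̂ ∩ C(X)) → ℝ sending the class of f to the unique r with f − r ∈ M̂ is a well-defined ring isomorphism. -/
open Filter Topology

def constB1Hom (X : Type*) [TopologicalSpace X] : ℝ →+* B1 X where
  toFun := constB1
  map_one' := by ext x; rfl
  map_mul' := fun a b => by ext x; rfl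
  map_zero' := by ext x; rfl
  map_add' := fun a b => by ext x; rfl

theorem quotient_iso_real {X : Type*} [TopologicalSpace X]
    (N : Ideal (B1 X)) (hN : N.IsMaximal)
    (h : ∀ f : B1 X, ∃ r : ℝ, f - constB1 r ∈ N) :
    ∃ φ : (CFun X ⧸ Ideal.comap (inclB X) N) ≃+* ℝ,
      ∀ (f : CFun X) (r : ℝ), inclB X f - constB1 r ∈ N →
        φ (Ideal.Quotient.mk (Ideal.comap (inclB X) N) f) = r := by
  haveI := hN
  -- the composite ℝ → B1 X ⧸ N
  set e0 : ℝ →+* (B1 X ⧸ N) := (Ideal.Quotient.mk N).comp (constB1Hom X) with he0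
  have hbij : Function.Bijective e0 := by
    constructor
    · exact e0.injective
    · intro y
      obtain ⟨g, rfl⟩ := Ideal.Quotient.mk_surjective y
      obtain ⟨r, hr⟩ := h g
      exact ⟨r, (Ideal.Quotient.eq.mpr hr).symm⟩
  set e : ℝ ≃+* (B1 X ⧸ N) := RingEquiv.ofBijective e0 hbij with he
  -- the map CFun ⧸ comap N → B1 ⧸ N
  set θ : (CFun X ⧸ Ideal.comap (inclB X) N) →+* (B1 X ⧸ N) :=
    Ideal.quotientMap N (inclB X) le_rfl with hθ
  have hθbij : Function.Bijective θ := by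
    constructor
    · exact Ideal.quotientMap_injective
    · intro y
      obtain ⟨g, rfl⟩ := Ideal.Quotient.mk_surjective y
      obtain ⟨r, hr⟩ := h g
      refine ⟨Ideal.Quotient.mk _ (⟨fun _ => r, continuous_const⟩ : CFun X), ?_⟩
      rw [hθ, Ideal.quotientMap_mk]
      have : inclB X (⟨fun _ => r, continuous_const⟩ : CFun X) = constB1 r := rfl
      rw [this]
      exact (Ideal.Quotient.eq.mpr hr).symm
  refine ⟨(RingEquiv.ofBijective θ hθbij).trans e.symm, ?_⟩
  intro f r hfr
  have h1 : θ (Ideal.Quotient.mk (Ideal.comap (inclB X) N) f)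
      = Ideal.Quotient.mk N (inclB X f) := Ideal.quotientMap_mk
  have h2 : Ideal.Quotient.mk N (inclB X f) = e r := Ideal.Quotient.eq.mpr hfr
  show e.symm (θ (Ideal.Quotient.mk (Ideal.comap (inclB X) N) f)) = r
  rw [h1, h2, RingEquiv.symm_apply_apply]
end

section
/- Every real maximal ideal M̂ of B₁(X) is a closed ideal, i.e., [M̂ ∩ C(X)]_B = M̂, and M̂ ∩ C(X) is contained in a real maximal ideal of C(X). -/
open Filter Topology

section Aux

open Filter Topology

variable {X : Type*} [TopologicalSpace X]

theorem comp_mem_B1 {f : X → ℝ} (hf : f ∈ B1 X) {h : ℝ → ℝ} (hh : Continuous h) :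
    (fun x => h (f x)) ∈ B1 X := by
  obtain ⟨u, hu⟩ := hf
  exact ⟨fun n => ⟨fun x => h (u n x), hh.comp (u n).continuous⟩,
    fun x => (hh.tendsto _).comp (hu x)⟩

theorem phi_nonneg (φ : B1 X →+* ℝ) (a : B1 X) (ha : ∀ x, 0 ≤ (a : X → ℝ) x) : 0 ≤ φ a := by
  set s : B1 X := ⟨fun x => Real.sqrt ((a : X → ℝ) x), comp_mem_B1 a.2 Real.continuous_sqrt⟩
  have hs : s * s = a := by
    apply Subtype.ext
    funext x
    exact Real.mul_self_sqrt (ha x)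
  calc (0:ℝ) ≤ φ s * φ s := mul_self_nonneg _
  _ = φ (s * s) := (map_mul φ s s).symm
  _ = φ a := by rw [hs]

theorem phi_mono (φ : B1 X →+* ℝ) (a b : B1 X)
    (hab : ∀ x, (a : X → ℝ) x ≤ (b : X → ℝ) x) : φ a ≤ φ b := by
  have h0 : 0 ≤ φ (b - a) := phi_nonneg φ (b - a) (fun x => by
    have : ((b - a : B1 X) : X → ℝ) x = (b : X → ℝ) x - (a : X → ℝ) x := rfl
    rw [this]
    exact sub_nonneg.2 (hab x))
  rw [map_sub] at h0
  linarith

/-- `min (a^2) c` as an element of `B1 X`. -/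
def minSq (a : B1 X) (c : ℝ) : B1 X :=
  ⟨fun x => min (((a : X → ℝ) x) ^ 2) c,
    comp_mem_B1 a.2 ((continuous_pow 2).min continuous_const)⟩

theorem phi_minSq (φ : B1 X →+* ℝ) (hφ : ∀ r : ℝ, φ (constB1 r) = r)
    (a : B1 X) (ha : φ a = 0) (c : ℝ) (hc : 0 ≤ c) : φ (minSq (X := X) a c) = 0 := by
  set m := minSq (X := X) a c with hm
  have hge : 0 ≤ φ m := phi_nonneg φ m (fun x => le_min (sq_nonneg _) hc)
  have hle : φ m ≤ 0 := by
    have := phi_mono φ m (a * a) (fun x => by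
      have h1 : ((a * a : B1 X) : X → ℝ) x = (a : X → ℝ) x * (a : X → ℝ) x := rfl
      have h2 : (m : X → ℝ) x = min (((a : X → ℝ) x) ^ 2) c := rfl
      rw [h1, h2, ← pow_two]
      exact min_le_left _ _)
    rwa [map_mul, ha, mul_zero] at this
  have hid : (a * a - m) * (constB1 c - m) = 0 := by
    apply Subtype.ext
    funext x
    have h1 : (((a * a - m) * (constB1 c - m) : B1 X) : X → ℝ) x =
        ((a : X → ℝ) x * (a : X → ℝ) x - min (((a : X → ℝ) x) ^ 2) c) *
          (c - min (((a : X → ℝ) x) ^ 2) c) := rfl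
    have h0 : ((0 : B1 X) : X → ℝ) x = 0 := rfl
    rw [h1, h0]
    rcases le_total (((a : X → ℝ) x) ^ 2) c with h | h
    · rw [min_eq_left h, ← pow_two]
      ring
    · rw [min_eq_right h]
      ring
  have := congrArg φ hid
  rw [map_mul, map_sub, map_sub, map_mul, ha, hφ c, map_zero, mul_zero, zero_sub] at this
  rcases mul_eq_zero.1 this with h | h
  · linarith [neg_eq_zero.1 h]
  · have : φ m = c := by linarith
    linarith

theorem exists_inv_B1 (a : B1 X) (ha : ∀ x, (a : X → ℝ) x ≠ 0) :
    ∃ b : B1 X, a * b = 1 := by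
  obtain ⟨v, hv⟩ := a.2
  have hb : (fun x => ((a : X → ℝ) x)⁻¹) ∈ B1 X := by
    refine ⟨fun n => ⟨fun x => v n x / max ((v n x) ^ 2) (((n : ℝ) + 1))⁻¹, ?_⟩, ?_⟩
    · exact (v n).continuous.div
        (((v n).continuous.pow 2).max continuous_const)
        (fun x => ne_of_gt (lt_of_lt_of_le (by positivity) (le_max_right _ _)))
    · intro x
      have h1 : Tendsto (fun n => v n x) atTop (𝓝 ((a : X → ℝ) x)) := hv x
      have h2 : Tendsto (fun n : ℕ => ((n : ℝ) + 1)⁻¹) atTop (𝓝 0) :=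
        tendsto_one_div_add_atTop_nhds_zero_nat.congr (fun n => by rw [one_div])
      have hmax : Tendsto (fun n => max ((v n x) ^ 2) (((n : ℝ) + 1))⁻¹) atTop
          (𝓝 (((a : X → ℝ) x) ^ 2)) := by
        have := (h1.pow 2).max h2
        rwa [max_eq_left (sq_nonneg _)] at this
      have h3 := h1.div hmax (pow_ne_zero 2 (ha x))
      have h4 : (a : X → ℝ) x / ((a : X → ℝ) x) ^ 2 = ((a : X → ℝ) x)⁻¹ := by
        rw [pow_two, mul_comm, ← div_div, div_self (ha x), one_div]
      rwa [h4] at h3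
  refine ⟨⟨_, hb⟩, ?_⟩
  apply Subtype.ext
  funext x
  exact mul_inv_cancel₀ (ha x)

theorem exists_zero_of_phi_eq_zero (φ : B1 X →+* ℝ) (a : B1 X) (ha : φ a = 0) :
    ∃ x, (a : X → ℝ) x = 0 := by
  by_contra hcon
  push_neg at hcon
  obtain ⟨b, hb⟩ := exists_inv_B1 a hcon
  have := congrArg φ hb
  rw [map_mul, ha, zero_mul, map_one] at this
  exact zero_ne_one this

set_option maxHeartbeats 2000000 in
theorem key_lemma (φ : B1 X →+* ℝ) (hφ : ∀ r : ℝ, φ (constB1 r) = r)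
    (u : ℕ → B1 X) (hc : ∀ k, Continuous ((u k : X → ℝ)))
    (hu : ∀ k, φ (u k) = 0) (f : B1 X) (hf : φ f = 0) :
    ∃ x, (f : X → ℝ) x = 0 ∧ ∀ k, (u k : X → ℝ) x = 0 := by
  -- the truncations
  set c : ℕ → ℝ := fun k => (2⁻¹ : ℝ) ^ (k + 1) with hcdef
  have hcpos : ∀ k, 0 < c k := fun k => by positivity
  set m : ℕ → X → ℝ := fun k x => min (((u k : X → ℝ) x) ^ 2) (c k) with hmdef
  have hm_nonneg : ∀ k x, 0 ≤ m k x := fun k x => le_min (sq_nonneg _) (hcpos k).le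
  have hm_le : ∀ k x, m k x ≤ c k := fun k x => min_le_right _ _
  have hm_cont : ∀ k, Continuous (m k) := fun k =>
    ((hc k).pow 2).min continuous_const
  have hsumc : Summable c := by
    have := summable_geometric_of_lt_one (r := (2⁻¹ : ℝ)) (by norm_num) (by norm_num)
    exact (summable_nat_add_iff 1).2 this
  -- the continuous sum
  have hS_cont : Continuous (fun x => ∑' k, m k x) :=
    continuous_tsum hm_cont hsumc (fun k x => by
      rw [Real.norm_eq_abs, abs_of_nonneg (hm_nonneg k x)]; exact hm_le k x)
  set S : B1 X := ⟨fun x => ∑' k, m k x, CFun_le_B1 X hS_cont⟩ with hSdef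
  have hsx : ∀ x, Summable (fun k => m k x) := fun x =>
    Summable.of_nonneg_of_le (fun k => hm_nonneg k x) (fun k => hm_le k x) hsumc
  -- φ of each truncation is zero
  have hφm : ∀ k, φ (minSq (X := X) (u k) (c k)) = 0 := fun k =>
    phi_minSq φ hφ (u k) (hu k) (c k) (hcpos k).le
  -- φ S = 0
  have hφS_nonneg : 0 ≤ φ S := phi_nonneg φ S (fun x =>
    tsum_nonneg (fun k => hm_nonneg k x))
  have hφS_le : ∀ K : ℕ, φ S ≤ (2⁻¹ : ℝ) ^ K := by
    intro K
    set P : B1 X := ∑ k ∈ Finset.range K, minSq (X := X) (u k) (c k) with hPdef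
    have hφP : φ P = 0 := by
      rw [map_sum]
      exact Finset.sum_eq_zero (fun k _ => hφm k)
    have hPcoe : ∀ x, (P : X → ℝ) x = ∑ k ∈ Finset.range K, m k x := by
      intro x
      rw [hPdef, AddSubmonoidClass.coe_finset_sum, Finset.sum_apply]
      exact Finset.sum_congr rfl (fun k _ => rfl)
    have hle : ∀ x, (S : X → ℝ) x ≤ (P : X → ℝ) x + (2⁻¹ : ℝ) ^ K := by
      intro x
      rw [hPcoe x]
      have htail : ∑' i, m (i + K) x ≤ (2⁻¹ : ℝ) ^ K := by
        have h1 : ∑' i, m (i + K) x ≤ ∑' i, c (i + K) := by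
          refine Summable.tsum_le_tsum (fun i => hm_le _ x) ?_ ?_
          · exact (summable_nat_add_iff K).2 (hsx x)
          · exact (summable_nat_add_iff K).2 hsumc
        have h2 : ∑' i, c (i + K) = (2⁻¹ : ℝ) ^ K := by
          have hgeom : ∑' i : ℕ, (2⁻¹ : ℝ) ^ i = 2 := by
            rw [tsum_geometric_of_lt_one (by norm_num) (by norm_num)]
            norm_num
          have hck : ∀ i : ℕ, c (i + K) = (2⁻¹ : ℝ) ^ (K + 1) * (2⁻¹ : ℝ) ^ i := by
            intro i
            show (2⁻¹ : ℝ) ^ (i + K + 1) = _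
            rw [← pow_add]
            congr 1
            omega
          rw [tsum_congr hck, tsum_mul_left, hgeom, pow_succ, mul_assoc]
          norm_num
        linarith
      have hSx : (S : X → ℝ) x = ∑' k, m k x := rfl
      rw [hSx, ← Summable.sum_add_tsum_nat_add K (hsx x)]
      linarith [htail]
    have := phi_mono φ S (P + constB1 ((2⁻¹ : ℝ) ^ K)) (fun x => by
      have hcoe : ((P + constB1 ((2⁻¹ : ℝ) ^ K) : B1 X) : X → ℝ) x
          = (P : X → ℝ) x + (2⁻¹ : ℝ) ^ K := rfl
      rw [hcoe]; exact hle x)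
    rwa [map_add, hφP, hφ, zero_add] at this
  have hφS : φ S = 0 := by
    have htend : Tendsto (fun K : ℕ => (2⁻¹ : ℝ) ^ K) atTop (𝓝 0) :=
      tendsto_pow_atTop_nhds_zero_of_lt_one (by norm_num) (by norm_num)
    have : φ S ≤ 0 := ge_of_tendsto' htend hφS_le
    linarith
  -- the witness function g
  set g : B1 X := minSq (X := X) f 1 + S with hgdef
  have hφg : φ g = 0 := by
    rw [hgdef, map_add, hφS, phi_minSq φ hφ f hf 1 zero_le_one, add_zero]
  obtain ⟨x₀, hx₀⟩ := exists_zero_of_phi_eq_zero φ g hφg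
  have hgcoe : (g : X → ℝ) x₀ = min (((f : X → ℝ) x₀) ^ 2) 1 + ∑' k, m k x₀ := rfl
  rw [hgcoe] at hx₀
  have hA : 0 ≤ min (((f : X → ℝ) x₀) ^ 2) 1 := le_min (sq_nonneg _) zero_le_one
  have hB : 0 ≤ ∑' k, m k x₀ := tsum_nonneg (fun k => hm_nonneg k x₀)
  have hminf : min (((f : X → ℝ) x₀) ^ 2) 1 = 0 := by linarith
  have hSx₀ : ∑' k, m k x₀ = 0 := by linarith
  refine ⟨x₀, ?_, ?_⟩
  · rcases min_eq_iff.1 hminf with ⟨h, _⟩ | ⟨h, _⟩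
    · exact pow_eq_zero_iff (by norm_num) |>.1 h
    · norm_num at h
  · intro k
    have : m k x₀ ≤ 0 := hSx₀ ▸ Summable.le_tsum (hsx x₀) k (fun j _ => hm_nonneg j x₀)
    have hmk : m k x₀ = 0 := le_antisymm this (hm_nonneg k x₀)
    rcases min_eq_iff.1 hmk with ⟨h, _⟩ | ⟨h, _⟩
    · exact pow_eq_zero_iff (by norm_num) |>.1 h
    · exact absurd h (ne_of_gt (hcpos k))

def constRingHomB1 (X : Type*) [TopologicalSpace X] : ℝ →+* B1 X where
  toFun := constB1
  map_one' := rfl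
  map_mul' := fun _ _ => rfl
  map_zero' := rfl
  map_add' := fun _ _ => rfl

end Aux

theorem real_maximal_B1_is_closed {X : Type*} [TopologicalSpace X]
    (N : Ideal (B1 X)) (hN : IsRealMaxB N) :
    idealB (Ideal.comap (inclB X) N) = (↑N : Set (B1 X)) ∧
      ∃ M : Ideal (CFun X), IsRealMax M ∧ Ideal.comap (inclB X) N ≤ M := by

  obtain ⟨hmax, ⟨e⟩⟩ := hN
  set φ : B1 X →+* ℝ := e.toRingHom.comp (Ideal.Quotient.mk N) with hφdef
  have hker : ∀ a : B1 X, φ a = 0 ↔ a ∈ N := by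
    intro a
    rw [hφdef]
    simp only [RingHom.comp_apply, RingEquiv.toRingHom_eq_coe, RingHom.coe_coe]
    rw [map_eq_zero_iff e e.injective, Ideal.Quotient.eq_zero_iff_mem]
  have hconst : ∀ r : ℝ, φ (constB1 r) = r := by
    intro r
    have h := Subsingleton.elim (φ.comp (constRingHomB1 X)) (RingHom.id ℝ)
    calc φ (constB1 r) = (φ.comp (constRingHomB1 X)) r := rfl
    _ = r := by rw [h]; rfl
  have hsurj : Function.Surjective (φ.comp (inclB X)) := by
    intro t
    refine ⟨⟨fun _ => t, continuous_const⟩, ?_⟩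
    have h1 : inclB X ⟨fun _ => t, continuous_const⟩ = constB1 t := Subtype.ext rfl
    rw [RingHom.comp_apply, h1, hconst]
  constructor
  · apply Set.eq_of_subset_of_subset
    · rintro f ⟨w, hwN, hw⟩
      have hw0 : ∀ n, φ (inclB X (w n)) = 0 := fun n => (hker _).2 (hwN n)
      have hf' : φ (f - constB1 (φ f)) = 0 := by rw [map_sub, hconst, sub_self]
      obtain ⟨x₀, hfx₀, hux₀⟩ := key_lemma φ hconst (fun n => inclB X (w n))
        (fun n => (w n).2) hw0 (f - constB1 (φ f)) hf'
      have h1 : (f : X → ℝ) x₀ = φ f := by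
        have h2 : ((f - constB1 (φ f) : B1 X) : X → ℝ) x₀ = (f : X → ℝ) x₀ - φ f := rfl
        rw [h2] at hfx₀
        linarith
      have h2 : Tendsto (fun n => ((w n : X → ℝ)) x₀) atTop (𝓝 ((f : X → ℝ) x₀)) := hw x₀
      have h3 : (fun n => ((w n : X → ℝ)) x₀) = fun _ => (0 : ℝ) :=
        funext fun n => hux₀ n
      rw [h3] at h2
      have h4 : (f : X → ℝ) x₀ = 0 := tendsto_nhds_unique h2 tendsto_const_nhds
      have h5 : φ f = 0 := by rw [← h1, h4]
      exact (hker f).1 h5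
    · intro f hfN
      have hfN' : f ∈ N := hfN
      obtain ⟨v, hv⟩ := f.2
      set V : ℕ → B1 X := fun n => ⟨v n, CFun_le_B1 X (v n).continuous⟩ with hVdef
      set r : ℕ → ℝ := fun n => φ (V n) with hrdef
      have hu0 : ∀ n, φ (V n - constB1 (r n)) = 0 := fun n => by
        rw [map_sub, hconst, sub_self]
      obtain ⟨x₀, hfx₀, hux₀⟩ := key_lemma φ hconst (fun n => V n - constB1 (r n))
        (fun n => by exact (v n).continuous.sub continuous_const) hu0 f ((hker f).2 hfN')
      have hrn : ∀ n, r n = v n x₀ := by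
        intro n
        have h6 : ((V n - constB1 (r n) : B1 X) : X → ℝ) x₀ = v n x₀ - r n := rfl
        have := hux₀ n
        rw [h6] at this
        linarith
      have hr0 : Tendsto r atTop (𝓝 0) := by
        have h7 := hv x₀
        rw [show (f : X → ℝ) x₀ = 0 from hfx₀] at h7
        exact (funext hrn : r = fun n => v n x₀) ▸ h7
      refine ⟨fun n => ⟨fun x => v n x - r n, (v n).continuous.sub continuous_const⟩, ?_, ?_⟩
      · intro n
        rw [Ideal.mem_comap]
        have h8 : inclB X (⟨fun x => v n x - r n,
            (v n).continuous.sub continuous_const⟩ : CFun X) = V n - constB1 (r n) :=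
          Subtype.ext rfl
        rw [h8]
        exact (hker _).1 (hu0 n)
      · intro x
        have h9 := (hv x).sub hr0
        simpa using h9
  · refine ⟨RingHom.ker (φ.comp (inclB X)),
      ⟨RingHom.ker_isMaximal_of_surjective _ hsurj,
        ⟨RingHom.quotientKerEquivOfSurjective hsurj⟩⟩, ?_⟩
    intro a ha
    rw [Ideal.mem_comap] at ha
    rw [RingHom.mem_ker, RingHom.comp_apply]
    exact (hker _).2 ha
end

section
/- The map M ↦ M_B is a bijection between the set of real maximal ideals of C(X) and the set of real maximal ideals of B₁(X). -/
open Filter Topology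

/-
A ring homomorphism `φ` from `C(X)` or `B₁(X)` to `ℝ` is monotone (squares are nonnegative) and sends
pointwise null sequences to null sequences: this is the countable intersection property of the
zero sets, obtained by summing `∑ 2⁻ᵏ qₖ` and inverting a nowhere vanishing function. Hence a
homomorphism `C(X) → ℝ` extends to `B₁(X)` by `φ (lim uₙ) := lim φ uₙ`, and every homomorphism
`B₁(X) → ℝ` is the extension of its restriction. Since `ℝ` has no nontrivial endomorphisms, real
maximal ideals are exactly the kernels of homomorphisms to `ℝ`, and the kernel of the extension of
`φ` consists of the pointwise limits of sequences in `ker φ`.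
-/

section RealIdeals

variable {A : Type*} [CommRing A]

lemma ringEquiv_quotientKer_apply_mk {φ : A →+* ℝ} (hφ : Function.Surjective φ)
    (e : (A ⧸ RingHom.ker φ) ≃+* ℝ) (a : A) : e (Ideal.Quotient.mk _ a) = φ a := by
  set q := RingHom.quotientKerEquivOfSurjective hφ
  have h : e.toRingHom.comp q.symm.toRingHom = RingHom.id ℝ := Subsingleton.elim _ _
  calc e (Ideal.Quotient.mk _ a) = e (q.symm (q (Ideal.Quotient.mk _ a))) := by
        rw [q.symm_apply_apply]
    _ = φ a := (RingHom.congr_fun h _).trans (RingHom.quotientKerEquivOfSurjective_apply_mk _ a)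

variable (A) in
noncomputable def realMaximalIdealEquiv :
    {M : Ideal A // M.IsMaximal ∧ Nonempty ((A ⧸ M) ≃+* ℝ)} ≃
      {φ : A →+* ℝ // Function.Surjective φ} where
  toFun M := ⟨(Classical.choice M.2.2).toRingHom.comp (Ideal.Quotient.mk M.1),
    (Classical.choice M.2.2).surjective.comp Ideal.Quotient.mk_surjective⟩
  invFun φ := ⟨RingHom.ker φ.1, RingHom.ker_isMaximal_of_surjective _ φ.2,
    ⟨RingHom.quotientKerEquivOfSurjective φ.2⟩⟩
  left_inv M := Subtype.ext <|
    (RingHom.ker_comp_of_injective _ (Classical.choice M.2.2).injective).trans Ideal.mk_ker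
  right_inv φ := Subtype.ext <| RingHom.ext <| ringEquiv_quotientKer_apply_mk φ.2 _

end RealIdeals

section Admissible

variable {X : Type*}

structure IsAdmissible (R : Subring (X → ℝ)) : Prop where
  comp_mem {F : ℝ → ℝ} {f : X → ℝ} : Continuous F → f ∈ R → F ∘ f ∈ R
  inv_mem {f : X → ℝ} : f ∈ R → (∀ x, f x ≠ 0) → f⁻¹ ∈ R
  tsum_mem {w : ℕ → X → ℝ} {C : ℝ} : (∀ k, w k ∈ R) → (∀ k x, |w k x| ≤ C) →
    (fun x => ∑' k, (1 / 2 : ℝ) ^ k * w k x) ∈ R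

namespace IsAdmissible

variable {R : Subring (X → ℝ)} (φ : R →+* ℝ)

def comp (hR : IsAdmissible R) (F : ℝ → ℝ) (hF : Continuous F) (f : R) : R :=
  ⟨F ∘ f, hR.comp_mem hF f.2⟩

def const (hR : IsAdmissible R) (r : ℝ) : R := hR.comp (fun _ => r) continuous_const 0

@[simp]
lemma coe_const (hR : IsAdmissible R) (r : ℝ) : (hR.const r : X → ℝ) = fun _ => r := rfl

lemma map_const (hR : IsAdmissible R) (r : ℝ) : φ (hR.const r) = r := by
  let c : ℝ →+* R := ⟨⟨⟨hR.const, rfl⟩, fun _ _ => rfl⟩, rfl, fun _ _ => rfl⟩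
  exact RingHom.congr_fun (Subsingleton.elim (φ.comp c) (RingHom.id ℝ)) r

lemma map_surjective (hR : IsAdmissible R) : Function.Surjective φ :=
  fun r => ⟨hR.const r, hR.map_const φ r⟩

lemma map_nonneg (hR : IsAdmissible R) {f : R} (hf : ∀ x, 0 ≤ (f : X → ℝ) x) : 0 ≤ φ f := by
  set s := hR.comp Real.sqrt Real.continuous_sqrt f
  have hs : s * s = f := Subtype.ext <| funext fun x => Real.mul_self_sqrt (hf x)
  rw [← hs, map_mul]
  exact mul_self_nonneg _

lemma map_mono (hR : IsAdmissible R) {f g : R} (h : ∀ x, (f : X → ℝ) x ≤ (g : X → ℝ) x) :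
    φ f ≤ φ g := by
  have := hR.map_nonneg φ (f := g - f) fun x => sub_nonneg.2 (h x)
  rwa [map_sub, sub_nonneg] at this

lemma map_comp_abs (hR : IsAdmissible R) (f : R) :
    φ (hR.comp (|·|) continuous_abs f) = |φ f| := by
  have hsq : hR.comp (|·|) continuous_abs f * hR.comp (|·|) continuous_abs f = f * f :=
    Subtype.ext <| funext fun x => abs_mul_abs_self _
  have h := congrArg φ hsq
  rw [map_mul, map_mul, ← abs_mul_abs_self (φ f)] at h
  exact (mul_self_inj (hR.map_nonneg φ fun x => abs_nonneg _) (abs_nonneg _)).1 h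

lemma map_comp_min (hR : IsAdmissible R) (f : R) (c : ℝ) :
    φ (hR.comp (min · c) (continuous_id.min continuous_const) f) = min (φ f) c := by
  have hmin : ∀ a : ℝ, min a c = (a + c - |a - c|) * (1 / 2) := fun a => by
    rcases le_total a c with h | h
    · rw [min_eq_left h, abs_of_nonpos (sub_nonpos.2 h)]; ring
    · rw [min_eq_right h, abs_of_nonneg (sub_nonneg.2 h)]; ring
  have h : hR.comp (min · c) (continuous_id.min continuous_const) f =
      (f + hR.const c - hR.comp (|·|) continuous_abs (f - hR.const c)) * hR.const (1 / 2) :=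
    Subtype.ext <| funext fun x => hmin _
  rw [h, map_mul, map_sub, map_add, hR.map_comp_abs, map_sub, hR.map_const, hR.map_const, hmin]

lemma map_ne_of_forall_ne (hR : IsAdmissible R) {f : R} {c : ℝ} (h : ∀ x, (f : X → ℝ) x ≠ c) :
    φ f ≠ c := by
  have hne : ∀ x, ((f - hR.const c : R) : X → ℝ) x ≠ 0 := fun x => sub_ne_zero.2 (h x)
  let g : R := ⟨_, hR.inv_mem (f - hR.const c).2 hne⟩
  have hg : (f - hR.const c) * g = 1 := Subtype.ext <| funext fun x => mul_inv_cancel₀ (hne x)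
  intro hfc
  simpa [hfc, hR.map_const] using congrArg φ hg

lemma exists_forall_eq_of_map_eq (hR : IsAdmissible R) {q : ℕ → R} {c : ℝ}
    (h0 : ∀ k x, 0 ≤ (q k : X → ℝ) x) (hc : ∀ k x, (q k : X → ℝ) x ≤ c)
    (hφ : ∀ k, φ (q k) = c) : ∃ x, ∀ k, (q k : X → ℝ) x = c := by
  -- `g = ∑ 2⁻ᵏ q k` has `2c ≤ φ g` by monotonicity, yet `g < 2c` pointwise.
  by_contra! hX
  have hgeom := hasSum_geometric_two.mul_right c
  have hsum : ∀ x, Summable fun k => (1 / 2 : ℝ) ^ k * (q k : X → ℝ) x := fun x =>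
    hgeom.summable.of_nonneg_of_le (fun k => mul_nonneg (by positivity) (h0 k x))
      (fun k => mul_le_mul_of_nonneg_left (hc k x) (by positivity))
  let g : R :=
    ⟨_, hR.tsum_mem (fun k => (q k).2) fun k x => (abs_of_nonneg (h0 k x)).trans_le (hc k x)⟩
  have hg_lt : ∀ x, (g : X → ℝ) x < 2 * c := fun x => by
    obtain ⟨k, hk⟩ := hX x
    rw [← hgeom.tsum_eq]
    exact (hsum x).tsum_lt_tsum (fun j => mul_le_mul_of_nonneg_left (hc j x) (by positivity))
      (mul_lt_mul_of_pos_left ((hc k x).lt_of_ne hk) (by positivity)) hgeom.summable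
  have hg_ge : 2 * c ≤ φ g := by
    refine le_of_tendsto' hgeom.tendsto_sum_nat fun K => ?_
    let P : R := ∑ k ∈ Finset.range K, hR.const ((1 / 2) ^ k) * q k
    have hP : φ P = ∑ k ∈ Finset.range K, (1 / 2 : ℝ) ^ k * c := by
      simp only [P, map_sum, map_mul, hR.map_const, hφ]
    rw [← hP]
    refine hR.map_mono φ fun x => ?_
    simp only [P, AddSubmonoidClass.coe_finsetSum, Finset.sum_apply]
    exact (hsum x).sum_le_tsum _ fun k _ => mul_nonneg (pow_nonneg (by norm_num) k) (h0 k x)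
  exact hR.map_ne_of_forall_ne φ (fun x => ((hg_lt x).trans_le hg_ge).ne) rfl

lemma tendsto_map_zero (hR : IsAdmissible R) {v : ℕ → R}
    (hv : ∀ x, Tendsto (fun n => (v n : X → ℝ) x) atTop (𝓝 0)) :
    Tendsto (fun n => φ (v n)) atTop (𝓝 0) := by
  -- Along a subsequence with `ε ≤ |φ (v n)|`, the truncations `min (v n ^ 2) ε²` all map to `ε²`,
  -- so they equal `ε²` at a common point, where `v n` cannot tend to `0`.
  by_contra h
  obtain ⟨ε, hε, hfreq⟩ : ∃ ε > 0, ∃ᶠ n in atTop, ε ≤ |φ (v n)| := by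
    simpa [Metric.tendsto_nhds, Filter.frequently_atTop] using h
  obtain ⟨s, hs, hεs⟩ := extraction_of_frequently_atTop hfreq
  let q k := hR.comp (min · (ε ^ 2)) (continuous_id.min continuous_const) (v (s k) * v (s k))
  have hq : ∀ k x, (q k : X → ℝ) x = min ((v (s k) : X → ℝ) x * (v (s k) : X → ℝ) x) (ε ^ 2) :=
    fun _ _ => rfl
  obtain ⟨x, hx⟩ : ∃ x, ∀ k, (q k : X → ℝ) x = ε ^ 2 := by
    refine hR.exists_forall_eq_of_map_eq φ (fun k x => ?_) (fun k x => ?_) fun k => ?_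
    · rw [hq]; exact le_min (mul_self_nonneg _) (by positivity)
    · rw [hq]; exact min_le_right _ _
    · rw [hR.map_comp_min, map_mul, min_eq_right]
      simpa [← sq, sq_abs] using pow_le_pow_left₀ hε.le (hεs k) 2
  have hq0 : Tendsto (fun k => (q k : X → ℝ) x) atTop (𝓝 (min (0 * 0) (ε ^ 2))) := by
    have hvx := (hv x).comp hs.tendsto_atTop
    simpa only [hq, Function.comp_def] using (hvx.mul hvx).min tendsto_const_nhds
  rw [funext hx, zero_mul, min_eq_left (by positivity)] at hq0
  exact (pow_pos hε 2).ne' (tendsto_nhds_unique tendsto_const_nhds hq0)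

lemma tendsto_map_sub_map (hR : IsAdmissible R) {u w : ℕ → R} {l : X → ℝ}
    (hu : ∀ x, Tendsto (fun n => (u n : X → ℝ) x) atTop (𝓝 (l x)))
    (hw : ∀ x, Tendsto (fun n => (w n : X → ℝ) x) atTop (𝓝 (l x))) :
    Tendsto (fun n => φ (u n) - φ (w n)) atTop (𝓝 0) := by
  simpa only [map_sub] using hR.tendsto_map_zero φ (v := fun n => u n - w n) fun x => by
    simpa using (hu x).sub (hw x)

lemma cauchySeq_map (hR : IsAdmissible R) {u : ℕ → R} {l : X → ℝ}
    (hu : ∀ x, Tendsto (fun n => (u n : X → ℝ) x) atTop (𝓝 (l x))) :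
    CauchySeq fun n => φ (u n) := by
  rw [cauchySeq_iff_tendsto_dist_atTop_0, tendsto_iff_seq_tendsto]
  intro p hp
  rw [← prod_atTop_atTop_eq] at hp
  have h := hR.tendsto_map_sub_map φ (fun x => (hu x).comp (tendsto_fst.comp hp))
    (fun x => (hu x).comp (tendsto_snd.comp hp))
  simpa [Real.dist_eq, Function.comp_def] using h.abs

noncomputable def realMaximalIdealEquivHom (hR : IsAdmissible R) :
    {M : Ideal R // M.IsMaximal ∧ Nonempty ((R ⧸ M) ≃+* ℝ)} ≃ (R →+* ℝ) :=
  (realMaximalIdealEquiv R).trans (Equiv.subtypeUnivEquiv fun φ => hR.map_surjective φ)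

lemma ker_realMaximalIdealEquivHom (hR : IsAdmissible R)
    (M : {M : Ideal R // M.IsMaximal ∧ Nonempty ((R ⧸ M) ≃+* ℝ)}) :
    RingHom.ker (hR.realMaximalIdealEquivHom M) = M.1 :=
  congrArg Subtype.val (hR.realMaximalIdealEquivHom.symm_apply_apply M)

end IsAdmissible

end Admissible

section Instances

variable {X : Type*} [TopologicalSpace X]

lemma isAdmissible_CFun : IsAdmissible (CFun X) where
  comp_mem hF hf := hF.comp hf
  inv_mem hf hne := Continuous.inv₀ hf hne
  tsum_mem hw hC := continuous_tsum (fun k => continuous_const.mul (hw k))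
    (hasSum_geometric_two.summable.mul_right _) fun k x => by
      rw [Real.norm_eq_abs, abs_mul, abs_of_nonneg (by positivity)]
      exact mul_le_mul_of_nonneg_left (hC k x) (by positivity)

lemma B1.comp_mem {F : ℝ → ℝ} {f : X → ℝ} (hF : Continuous F) (hf : f ∈ B1 X) :
    F ∘ f ∈ B1 X := by
  obtain ⟨u, hu⟩ := hf
  exact ⟨fun n => (ContinuousMap.mk F hF).comp (u n), fun x => (hF.tendsto _).comp (hu x)⟩

lemma B1.inv_mem {f : X → ℝ} (hf : f ∈ B1 X) (hne : ∀ x, f x ≠ 0) : f⁻¹ ∈ B1 X := by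
  obtain ⟨u, hu⟩ := hf
  have hden : ∀ (n : ℕ) (t : ℝ), t ^ 2 + 1 / (n + 1) ≠ 0 := fun n t => by positivity
  refine ⟨fun n => ⟨fun x => u n x / (u n x ^ 2 + 1 / (n + 1)),
    (u n).continuous.div (((u n).continuous.pow 2).add continuous_const) fun x => hden n _⟩, ?_⟩
  intro x
  have hlim := (hu x).div ((hu x).pow 2 |>.add tendsto_one_div_add_atTop_nhds_zero_nat)
    (by simpa using hne x)
  rw [add_zero, sq, div_mul_cancel_right₀ (hne x)] at hlim
  exact hlim

lemma B1.tsum_mem {w : ℕ → X → ℝ} {C : ℝ} (hw : ∀ k, w k ∈ B1 X) (hC : ∀ k x, |w k x| ≤ C) :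
    (fun x => ∑' k, (1 / 2 : ℝ) ^ k * w k x) ∈ B1 X := by
  -- Clamping keeps the approximants uniformly bounded, as dominated convergence needs.
  choose u hu using hw
  let clamp : C(ℝ, ℝ) := ⟨fun t => max (-C) (min t C), by fun_prop⟩
  have hclamp_le : ∀ t, |clamp t| ≤ |C| := fun t => abs_le.2
    ⟨(neg_le_neg (le_abs_self C)).trans (le_max_left _ _),
      max_le (neg_le_abs C) ((min_le_right _ _).trans (le_abs_self C))⟩
  have hclamp_eq : ∀ k x, clamp (w k x) = w k x := fun k x => by
    obtain ⟨h₁, h₂⟩ := abs_le.1 (hC k x)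
    simp [clamp, min_eq_left h₂, max_eq_right h₁]
  have hbound : Summable fun k : ℕ => (1 / 2 : ℝ) ^ k * |C| :=
    hasSum_geometric_two.summable.mul_right _
  have hterm : ∀ k m x, ‖(1 / 2 : ℝ) ^ k * clamp (u k m x)‖ ≤ (1 / 2 : ℝ) ^ k * |C| :=
    fun k m x => by
      rw [Real.norm_eq_abs, abs_mul, abs_of_nonneg (by positivity)]
      exact mul_le_mul_of_nonneg_left (hclamp_le _) (by positivity)
  refine ⟨fun m => ⟨fun x => ∑' k, (1 / 2 : ℝ) ^ k * clamp (u k m x),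
    continuous_tsum (fun k => continuous_const.mul (clamp.continuous.comp (u k m).continuous))
      hbound fun k x => hterm k m x⟩, fun x => ?_⟩
  refine tendsto_tsum_of_dominated_convergence hbound (fun k => ?_)
    (Eventually.of_forall fun m k => hterm k m x)
  simpa [hclamp_eq] using
    ((clamp.continuous.tendsto _).comp (hu k x)).const_mul ((1 / 2 : ℝ) ^ k)

lemma isAdmissible_B1 : IsAdmissible (B1 X) := ⟨B1.comp_mem, B1.inv_mem, B1.tsum_mem⟩

end Instances

section Extension

variable {X : Type*} [TopologicalSpace X] (φ : CFun X →+* ℝ)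

lemma B1.exists_seq_tendsto (f : B1 X) :
    ∃ u : ℕ → CFun X, ∀ x, Tendsto (fun n => (u n : X → ℝ) x) atTop (𝓝 ((f : X → ℝ) x)) := by
  obtain ⟨u, hu⟩ := f.2
  exact ⟨fun n => ⟨u n, (u n).continuous⟩, hu⟩

noncomputable def B1.approxSeq (f : B1 X) : ℕ → CFun X := (B1.exists_seq_tendsto f).choose

lemma B1.tendsto_approxSeq (f : B1 X) (x : X) :
    Tendsto (fun n => (B1.approxSeq f n : X → ℝ) x) atTop (𝓝 ((f : X → ℝ) x)) :=
  (B1.exists_seq_tendsto f).choose_spec x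

noncomputable def extendToB1Fun (f : B1 X) : ℝ := limUnder atTop fun n => φ (B1.approxSeq f n)

lemma tendsto_extendToB1Fun {f : B1 X} {u : ℕ → CFun X}
    (hu : ∀ x, Tendsto (fun n => (u n : X → ℝ) x) atTop (𝓝 ((f : X → ℝ) x))) :
    Tendsto (fun n => φ (u n)) atTop (𝓝 (extendToB1Fun φ f)) := by
  have hlim := (isAdmissible_CFun.cauchySeq_map φ (B1.tendsto_approxSeq f)).tendsto_limUnder
  simpa [extendToB1Fun] using
    (isAdmissible_CFun.tendsto_map_sub_map φ hu (B1.tendsto_approxSeq f)).add hlim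

noncomputable def extendToB1 : B1 X →+* ℝ where
  toFun := extendToB1Fun φ
  map_one' := tendsto_nhds_unique (tendsto_extendToB1Fun φ (u := 1) fun _ => tendsto_const_nhds)
    (by simp)
  map_zero' := tendsto_nhds_unique (tendsto_extendToB1Fun φ (u := 0) fun _ => tendsto_const_nhds)
    (by simp)
  map_mul' f g := by
    have hf := B1.tendsto_approxSeq f
    have hg := B1.tendsto_approxSeq g
    refine tendsto_nhds_unique (tendsto_extendToB1Fun φ
      (u := fun n => B1.approxSeq f n * B1.approxSeq g n) fun x => (hf x).mul (hg x)) ?_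
    simpa only [map_mul] using (tendsto_extendToB1Fun φ hf).mul (tendsto_extendToB1Fun φ hg)
  map_add' f g := by
    have hf := B1.tendsto_approxSeq f
    have hg := B1.tendsto_approxSeq g
    refine tendsto_nhds_unique (tendsto_extendToB1Fun φ
      (u := fun n => B1.approxSeq f n + B1.approxSeq g n) fun x => (hf x).add (hg x)) ?_
    simpa only [map_add] using (tendsto_extendToB1Fun φ hf).add (tendsto_extendToB1Fun φ hg)

lemma tendsto_extendToB1 {f : B1 X} {u : ℕ → CFun X}
    (hu : ∀ x, Tendsto (fun n => (u n : X → ℝ) x) atTop (𝓝 ((f : X → ℝ) x))) :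
    Tendsto (fun n => φ (u n)) atTop (𝓝 (extendToB1 φ f)) :=
  tendsto_extendToB1Fun φ hu

lemma extendToB1_comp_inclB : (extendToB1 φ).comp (inclB X) = φ :=
  RingHom.ext fun f => tendsto_nhds_unique
    (tendsto_extendToB1 φ (f := inclB X f) (u := fun _ => f) fun _ => tendsto_const_nhds)
    tendsto_const_nhds

lemma extendToB1_restrict (ψ : B1 X →+* ℝ) : extendToB1 (ψ.comp (inclB X)) = ψ := by
  ext f
  have hu := B1.tendsto_approxSeq f
  refine tendsto_nhds_unique (tendsto_extendToB1 _ hu) ?_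
  have hdiff := isAdmissible_B1.tendsto_map_sub_map ψ (u := fun n => inclB X (B1.approxSeq f n))
    (w := fun _ => f) hu fun _ => tendsto_const_nhds
  simpa using hdiff.add_const (ψ f)

noncomputable def restrictHomEquiv : (B1 X →+* ℝ) ≃ (CFun X →+* ℝ) where
  toFun ψ := ψ.comp (inclB X)
  invFun := extendToB1
  left_inv := extendToB1_restrict
  right_inv := extendToB1_comp_inclB

lemma coe_ker_extendToB1 :
    (RingHom.ker (extendToB1 φ) : Set (B1 X)) = idealB (RingHom.ker φ) := by
  ext f
  constructor
  · intro hf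
    have hu := B1.tendsto_approxSeq f
    have hφu := tendsto_extendToB1 φ hu
    rw [RingHom.mem_ker.1 hf] at hφu
    refine ⟨fun n => B1.approxSeq f n - isAdmissible_CFun.const (φ (B1.approxSeq f n)),
      fun n => ?_, fun x => by simpa using (hu x).sub hφu⟩
    rw [RingHom.mem_ker, map_sub, isAdmissible_CFun.map_const, sub_self]
  · rintro ⟨u, hker, hu⟩
    have hφu := tendsto_extendToB1 φ hu
    simp only [RingHom.mem_ker.1 (hker _)] at hφu
    exact RingHom.mem_ker.2 (tendsto_nhds_unique hφu tendsto_const_nhds)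

end Extension

theorem real_maximal_bijection {X : Type*} [TopologicalSpace X] :
    ∃ e : {M : Ideal (CFun X) // IsRealMax M} ≃ {N : Ideal (B1 X) // IsRealMaxB N},
      ∀ M : {M : Ideal (CFun X) // IsRealMax M},
        (↑(e M).1 : Set (B1 X)) = idealB M.1 := by
  refine ⟨isAdmissible_CFun.realMaximalIdealEquivHom.trans
    (restrictHomEquiv.symm.trans isAdmissible_B1.realMaximalIdealEquivHom.symm), fun M => ?_⟩
  rw [← isAdmissible_CFun.ker_realMaximalIdealEquivHom M]
  exact coe_ker_extendToB1 _
end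

section
/- If M is a hyper-real maximal ideal of C(X), then any maximal ideal ⟨M⟩ of B₁(X) containing the ideal of B₁(X) generated by M is hyper-real, and the assignment M ↦ ⟨M⟩ is injective on the set of hyper-real maximal ideals of C(X). -/
open Filter Topology

def constC (X : Type*) [TopologicalSpace X] : ℝ →+* CFun X where
  toFun r := ⟨fun _ => r, continuous_const⟩
  map_one' := rfl
  map_mul' _ _ := rfl
  map_zero' := rfl
  map_add' _ _ := rfl

theorem key_comap {X : Type*} [TopologicalSpace X] {M : Ideal (CFun X)} {E : Ideal (B1 X)}
    (hM : M.IsMaximal) (hE : E.IsMaximal)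
    (hle : Ideal.span (inclB X '' (↑M : Set (CFun X))) ≤ E) :
    Ideal.comap (inclB X) E = M := by
  have h1 : M ≤ Ideal.comap (inclB X) E := fun f hf =>
    hle (Ideal.subset_span ⟨f, hf, rfl⟩)
  have h2 : Ideal.comap (inclB X) E ≠ ⊤ := by
    intro h
    have : (1 : B1 X) ∈ E := by
      have := h ▸ Submodule.mem_top (R := CFun X) (x := (1 : CFun X))
      simpa using this
    exact hE.ne_top (Ideal.eq_top_of_isUnit_mem E this isUnit_one)
  exact (hM.eq_of_le h2 h1).symm

theorem hyper_quot {X : Type*} [TopologicalSpace X] {M : Ideal (CFun X)} {E : Ideal (B1 X)}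
    (hM : M.IsMaximal) (hE : E.IsMaximal)
    (hle : Ideal.span (inclB X '' (↑M : Set (CFun X))) ≤ E)
    (he : Nonempty ((B1 X ⧸ E) ≃+* ℝ)) : Nonempty ((CFun X ⧸ M) ≃+* ℝ) := by
  obtain ⟨e⟩ := he
  set φ : CFun X →+* ℝ :=
    e.toRingHom.comp ((Ideal.Quotient.mk E).comp (inclB X)) with hφ
  have hMker : M ≤ RingHom.ker φ := by
    intro f hf
    have h1 : inclB X f ∈ E := hle (Ideal.subset_span ⟨f, hf, rfl⟩)
    have h2 : Ideal.Quotient.mk E (inclB X f) = 0 := Ideal.Quotient.eq_zero_iff_mem.2 h1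
    simp [hφ, RingHom.mem_ker, RingHom.comp_apply, h2]
  have hker_ne : RingHom.ker φ ≠ ⊤ := by
    intro h
    have : φ 1 = 0 := by
      have := h ▸ Submodule.mem_top (R := CFun X) (x := (1 : CFun X))
      simpa [RingHom.mem_ker] using this
    simp at this
  have hkerM : M = RingHom.ker φ := hM.eq_of_le hker_ne hMker
  have hconst : ∀ r : ℝ, φ (constC X r) = r := by
    intro r
    have : φ.comp (constC X) = RingHom.id ℝ := Subsingleton.elim _ _
    calc φ (constC X r) = (φ.comp (constC X)) r := rfl
      _ = r := by rw [this]; rfl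
  have hsurj : Function.Surjective φ := fun r => ⟨constC X r, hconst r⟩
  exact ⟨(Ideal.quotEquivOfEq hkerM).trans (RingHom.quotientKerEquivOfSurjective hsurj)⟩

theorem hyperreal_extension {X : Type*} [TopologicalSpace X]
    (ext : Ideal (CFun X) → Ideal (B1 X))
    (hext : ∀ M : Ideal (CFun X), M.IsMaximal → ¬ Nonempty ((CFun X ⧸ M) ≃+* ℝ) →
      (ext M).IsMaximal ∧ Ideal.span (inclB X '' (↑M : Set (CFun X))) ≤ ext M) :
    (∀ M : Ideal (CFun X), M.IsMaximal → ¬ Nonempty ((CFun X ⧸ M) ≃+* ℝ) →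
        ¬ Nonempty ((B1 X ⧸ ext M) ≃+* ℝ)) ∧
      ∀ M N : Ideal (CFun X),
        M.IsMaximal → ¬ Nonempty ((CFun X ⧸ M) ≃+* ℝ) →
        N.IsMaximal → ¬ Nonempty ((CFun X ⧸ N) ≃+* ℝ) →
        ext M = ext N → M = N := by
  constructor
  · intro M hM hMr hcont
    exact hMr (hyper_quot hM (hext M hM hMr).1 (hext M hM hMr).2 hcont)
  · intro M N hM hMr hN hNr heq
    have h1 := key_comap hM (hext M hM hMr).1 (hext M hM hMr).2
    have h2 := key_comap hN (hext N hN hNr).1 (hext N hN hNr).2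
    rw [← h1, ← h2, heq]
end
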